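/- arXiv:2406.00728 — 5 statements merged into one kernel-verified Lean document; each statement's English description precedes it below -/
import Mathlib

section
/- Let T : K → L(E) be a pseudorepresentation of K on E which is an almost σ-representation, i.e. its σ-bound b(T) is finite and its σ-defect satisfies r(T) ≤ min{1/4, 1/(9·b(T)²)}. Then for every g ∈ K the operator T(g) is invertible in L(E), and ‖T(g)⁻¹‖ ≤ b(T)/(1 − r(T)). (Group case of the paper's Lemma on invertibility of almost σ-representations.) -/
/-!
Up to the σ-defect `r`, the operator `σ(g,g⁻¹)⁻¹ • T(g)` is a left inverse of `T(g⁻¹)`, so by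
the Neumann series `(σ(g,g⁻¹)⁻¹ • T(g)) T(g⁻¹)` is invertible. Hence `T(g) T(g⁻¹)` is
invertible for every `g`, and applying this to `g` and `g⁻¹` makes `T(g)` both left and right
invertible. The approximate left inverse `σ(g⁻¹,g)⁻¹ • T(g⁻¹)` of `T(g)` has norm at most `b`,
which bounds `‖T(g)⁻¹‖` by `b / (1 - r)`.
-/

/-- `ℓ(σ,g) = max {1, ‖σ(g,g⁻¹)⁻¹‖}`. -/
noncomputable def ell {K A : Type*} [Group K] [NormedRing A]
    (σ : K → K → A) (g : K) : ℝ :=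
  max 1 ‖Ring.inverse (σ g g⁻¹)‖

/-- The σ-bound `b(T) = sup_{g ∈ K} ℓ(σ,g)·‖T(g)‖` of a pseudorepresentation. -/
noncomputable def sigmaBound {K A E : Type*} [Group K] [NormedRing A]
    [NormedAddCommGroup E] [NormedSpace ℝ E]
    (σ : K → K → A) (T : K → E →L[ℝ] E) : ℝ :=
  ⨆ g : K, ell σ g * ‖T g‖

/-- The σ-defect
`r(T) = ‖id − T(1)‖ + sup_{g,h ∈ K} ℓ(σ,g)·‖σ(g,h)·T(gh) − T(g)∘T(h)‖`. -/
noncomputable def sigmaDefect {K A E : Type*} [Group K] [NormedRing A]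
    [NormedAddCommGroup E] [NormedSpace ℝ E]
    [Module A E] [SMulCommClass ℝ A E] [ContinuousConstSMul A E]
    (σ : K → K → A) (T : K → E →L[ℝ] E) : ℝ :=
  ‖(1 : E →L[ℝ] E) - T 1‖ +
    ⨆ p : K × K, ell σ p.1 * ‖σ p.1 p.2 • T (p.1 * p.2) - (T p.1).comp (T p.2)‖

theorem isUnit_of_mul_isUnit_left_of_mul_isUnit_right {M : Type*} [Monoid M] {x y z : M}
    (hxy : IsUnit (x * y)) (hzx : IsUnit (z * x)) : IsUnit x :=
  isUnit_iff_exists_and_exists.2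
    ⟨⟨y * hxy.unit⁻¹, by rw [← mul_assoc, IsUnit.mul_val_inv]⟩,
      ⟨hzx.unit⁻¹ * z, by rw [mul_assoc, IsUnit.val_inv_mul]⟩⟩

section NeumannSeries

variable {R : Type*} [NormedRing R] [HasSummableGeomSeries R]

theorem isUnit_of_norm_one_sub_lt_one {u : R} (h : ‖1 - u‖ < 1) : IsUnit u := by
  simpa using isUnit_one_sub_of_norm_lt_one h

theorem norm_ringInverse_le_of_norm_one_sub_le (h1 : ‖(1 : R)‖ ≤ 1) {u : R} {r : ℝ}
    (hr : r < 1) (h : ‖1 - u‖ ≤ r) : ‖Ring.inverse u‖ ≤ (1 - r)⁻¹ := by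
  have hgeom := tsum_geometric_le_of_norm_lt_one (1 - u) (h.trans_lt hr)
  rw [geom_series_eq_inverse _ (h.trans_lt hr), sub_sub_cancel] at hgeom
  have : (1 - ‖1 - u‖)⁻¹ ≤ (1 - r)⁻¹ := inv_anti₀ (by linarith) (by linarith)
  linarith

theorem norm_ringInverse_le_of_norm_one_sub_mul_le (h1 : ‖(1 : R)‖ ≤ 1) {x w : R} {r : ℝ}
    (hx : IsUnit x) (hr : r < 1) (h : ‖1 - w * x‖ ≤ r) :
    ‖Ring.inverse x‖ ≤ ‖w‖ / (1 - r) := by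
  have hwx : IsUnit (w * x) := isUnit_of_norm_one_sub_lt_one (h.trans_lt hr)
  have hinv : Ring.inverse x = Ring.inverse (w * x) * w := by
    rw [← mul_one (_ * w), ← Ring.mul_inverse_cancel x hx, ← mul_assoc, mul_assoc _ w,
      Ring.inverse_mul_cancel _ hwx, one_mul]
  calc ‖Ring.inverse x‖ ≤ ‖Ring.inverse (w * x)‖ * ‖w‖ := hinv ▸ norm_mul_le _ _
    _ ≤ (1 - r)⁻¹ * ‖w‖ := by
        gcongr; exact norm_ringInverse_le_of_norm_one_sub_le h1 hr h
    _ = ‖w‖ / (1 - r) := by rw [div_eq_inv_mul]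

end NeumannSeries

section ScalarOperators

variable {A E : Type*} [NormedRing A] [NormedAddCommGroup E] [NormedSpace ℝ E]
  [Module A E] [SMulCommClass ℝ A E] [ContinuousConstSMul A E]

theorem ContinuousLinearMap.norm_smul_le_of_norm_smul_le
    (hAE : ∀ (a : A) (e : E), ‖a • e‖ ≤ ‖a‖ * ‖e‖) (a : A) (S : E →L[ℝ] E) :
    ‖a • S‖ ≤ ‖a‖ * ‖S‖ :=
  (a • S).opNorm_le_bound (by positivity) fun e =>
    calc ‖a • S e‖ ≤ ‖a‖ * ‖S e‖ := hAE a (S e)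
      _ ≤ ‖a‖ * (‖S‖ * ‖e‖) := by gcongr; exact S.le_opNorm e
      _ = ‖a‖ * ‖S‖ * ‖e‖ := (mul_assoc _ _ _).symm

instance ContinuousLinearMap.isScalarTower_self :
    IsScalarTower A (E →L[ℝ] E) (E →L[ℝ] E) :=
  ⟨ContinuousLinearMap.smul_comp⟩

theorem ContinuousLinearMap.isUnit_smul {a : A} {S : E →L[ℝ] E} (ha : IsUnit a)
    (hS : IsUnit S) : IsUnit (a • S) := by
  obtain ⟨u, rfl⟩ := ha
  have hunit : IsUnit ((u : A) • (1 : E →L[ℝ] E)) :=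
    ⟨⟨_, (↑u⁻¹ : A) • 1, by ext; simp [smul_smul], by ext; simp [smul_smul]⟩, rfl⟩
  simpa only [smul_one_mul] using hunit.mul hS

end ScalarOperators

section AlmostRepresentation

variable {K A E : Type*} [Group K] [NormedRing A] [NormedAddCommGroup E] [NormedSpace ℝ E]
  [Module A E] [SMulCommClass ℝ A E] [ContinuousConstSMul A E]
  {σ : K → K → A} {T : K → E →L[ℝ] E}

theorem norm_inverse_smul_le_sigmaBound
    (hAE : ∀ (a : A) (e : E), ‖a • e‖ ≤ ‖a‖ * ‖e‖)
    (hb_fin : BddAbove (Set.range fun g : K => ell σ g * ‖T g‖)) (g : K) :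
    ‖Ring.inverse (σ g g⁻¹) • T g‖ ≤ sigmaBound σ T :=
  calc ‖Ring.inverse (σ g g⁻¹) • T g‖ ≤ ‖Ring.inverse (σ g g⁻¹)‖ * ‖T g‖ :=
        ContinuousLinearMap.norm_smul_le_of_norm_smul_le hAE _ _
    _ ≤ ell σ g * ‖T g‖ := by gcongr; exact le_max_right _ _
    _ ≤ sigmaBound σ T := le_ciSup hb_fin g

theorem norm_one_sub_inverse_smul_mul_le_sigmaDefect
    (hAE : ∀ (a : A) (e : E), ‖a • e‖ ≤ ‖a‖ * ‖e‖)
    (hr_fin : BddAbove (Set.range fun p : K × K =>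
      ell σ p.1 * ‖σ p.1 p.2 • T (p.1 * p.2) - (T p.1).comp (T p.2)‖))
    {g : K} (hσ : IsUnit (σ g g⁻¹)) :
    ‖1 - (Ring.inverse (σ g g⁻¹) • T g) * T g⁻¹‖ ≤ sigmaDefect σ T := by
  set D := σ g g⁻¹ • T (g * g⁻¹) - (T g).comp (T g⁻¹)
  have hsplit : 1 - (Ring.inverse (σ g g⁻¹) • T g) * T g⁻¹
      = (1 - T 1) + Ring.inverse (σ g g⁻¹) • D := by
    rw [smul_sub, smul_smul, Ring.inverse_mul_cancel _ hσ, one_smul, mul_inv_cancel]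
    ext; simp
  have hD : ‖Ring.inverse (σ g g⁻¹) • D‖ ≤ ell σ g * ‖D‖ :=
    (ContinuousLinearMap.norm_smul_le_of_norm_smul_le hAE _ _).trans
      (by gcongr; exact le_max_right _ _)
  have hsup := le_ciSup hr_fin (g, g⁻¹)
  calc _ ≤ ‖1 - T 1‖ + ‖Ring.inverse (σ g g⁻¹) • D‖ := hsplit ▸ norm_add_le _ _
    _ ≤ sigmaDefect σ T := by unfold sigmaDefect; linarith

end AlmostRepresentation

theorem almost_representation_invertible_general
    {K A E : Type*} [Group K]
    -- `A` is a unital real Banach algebra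
    [NormedRing A]
    -- `E` is a real Banach space which is an `A`-module
    [NormedAddCommGroup E] [NormedSpace ℝ E] [CompleteSpace E]
    [Module A E] [SMulCommClass ℝ A E] [ContinuousConstSMul A E]
    (hAE : ∀ (a : A) (e : E), ‖a • e‖ ≤ ‖a‖ * ‖e‖)
    -- `σ` is an `A`-valued multiplier for `K`
    (σ : K → K → A)
    (hσ_unit : ∀ g h, IsUnit (σ g h))
    -- `T` is an `A`-semilinear pseudorepresentation of `K` on `E`
    (T : K → E →L[ℝ] E)
    -- the σ-bound is finite and the σ-defect is finite
    (hb_fin : BddAbove (Set.range fun g : K => ell σ g * ‖T g‖))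
    (hr_fin : BddAbove (Set.range fun p : K × K =>
      ell σ p.1 * ‖σ p.1 p.2 • T (p.1 * p.2) - (T p.1).comp (T p.2)‖))
    -- `T` is an almost σ-representation
    (h_almost : sigmaDefect σ T ≤ min (1 / 4) (1 / (9 * (sigmaBound σ T) ^ 2))) :
    ∀ g : K, IsUnit (T g) ∧
      ‖Ring.inverse (T g)‖ ≤ sigmaBound σ T / (1 - sigmaDefect σ T) := by
  intro g
  have hr : sigmaDefect σ T < 1 := by linarith [h_almost.trans (min_le_left _ _)]
  have hdefect (h : K) :=
    norm_one_sub_inverse_smul_mul_le_sigmaDefect hAE hr_fin (hσ_unit h h⁻¹)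
  have hprod (h : K) : IsUnit (T h * T h⁻¹) := by
    have := ContinuousLinearMap.isUnit_smul (hσ_unit h h⁻¹)
      (isUnit_of_norm_one_sub_lt_one ((hdefect h).trans_lt hr))
    rwa [← smul_mul_assoc, smul_smul, Ring.mul_inverse_cancel _ (hσ_unit h h⁻¹), one_smul]
      at this
  have hunit : IsUnit (T g) :=
    isUnit_of_mul_isUnit_left_of_mul_isUnit_right (hprod g)
      (by simpa only [inv_inv] using hprod g⁻¹)
  refine ⟨hunit, ?_⟩
  calc ‖Ring.inverse (T g)‖
      ≤ ‖Ring.inverse (σ g⁻¹ g⁻¹⁻¹) • T g⁻¹‖ / (1 - sigmaDefect σ T) :=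
        norm_ringInverse_le_of_norm_one_sub_mul_le ContinuousLinearMap.norm_id_le hunit hr
          (by simpa only [inv_inv] using hdefect g⁻¹)
    _ ≤ sigmaBound σ T / (1 - sigmaDefect σ T) :=
        div_le_div_of_nonneg_right (norm_inverse_smul_le_sigmaBound hAE hb_fin g⁻¹)
          (by linarith)

/-- An almost σ-representation of a Hausdorff topological group `K` on a Banach
`A`-module `E` has invertible values, with `‖T(g)⁻¹‖ ≤ b(T)/(1 − r(T))`. -/
theorem almost_representation_invertible
    {K A E : Type*} [Group K] [TopologicalSpace K] [IsTopologicalGroup K] [T2Space K]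
    -- `A` is a unital real Banach algebra
    [NormedRing A] [NormedAlgebra ℝ A] [CompleteSpace A] [NormOneClass A]
    -- `E` is a real Banach space which is an `A`-module
    [NormedAddCommGroup E] [NormedSpace ℝ E] [CompleteSpace E]
    [Module A E] [SMulCommClass ℝ A E] [ContinuousConstSMul A E]
    (hAE : ∀ (a : A) (e : E), ‖a • e‖ ≤ ‖a‖ * ‖e‖)
    -- the action of `K` on `A` by unital isometric algebra automorphisms
    (act : K → A → A)
    (hact_one : ∀ a, act 1 a = a)
    (hact_mul : ∀ g h a, act (g * h) a = act g (act h a))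
    (hact_add : ∀ g a b, act g (a + b) = act g a + act g b)
    (hact_mul' : ∀ g a b, act g (a * b) = act g a * act g b)
    (hact_smul : ∀ g (r : ℝ) (a : A), act g (r • a) = r • act g a)
    (hact_unital : ∀ g, act g 1 = 1)
    (hact_isom : ∀ g a, ‖act g a‖ = ‖a‖)
    (hact_cont : Continuous fun p : K × A => act p.1 p.2)
    -- `σ` is an `A`-valued multiplier for `K`
    (σ : K → K → A)
    (hσ_cont : Continuous fun p : K × K => σ p.1 p.2)
    (hσ_unit : ∀ g h, IsUnit (σ g h))
    (hσ_central : ∀ g h a, σ g h * a = a * σ g h)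
    (hσ_normal₁ : ∀ h, σ 1 h = 1)
    (hσ_normal₂ : ∀ g, σ g 1 = 1)
    (hσ_cocycle : ∀ g h k, σ g h * σ (g * h) k = act g (σ h k) * σ g (h * k))
    -- `T` is an `A`-semilinear pseudorepresentation of `K` on `E`
    (T : K → E →L[ℝ] E)
    (hT_semilinear : ∀ g (a : A) (e : E), T g (a • e) = act g a • T g e)
    -- the σ-bound is finite and the σ-defect is finite
    (hb_fin : BddAbove (Set.range fun g : K => ell σ g * ‖T g‖))
    (hr_fin : BddAbove (Set.range fun p : K × K =>
      ell σ p.1 * ‖σ p.1 p.2 • T (p.1 * p.2) - (T p.1).comp (T p.2)‖))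
    -- `T` is an almost σ-representation
    (h_almost : sigmaDefect σ T ≤ min (1 / 4) (1 / (9 * (sigmaBound σ T) ^ 2))) :
    ∀ g : K, IsUnit (T g) ∧
      ‖Ring.inverse (T g)‖ ≤ sigmaBound σ T / (1 - sigmaDefect σ T) :=
  almost_representation_invertible_general hAE σ hσ_unit T hb_fin hr_fin h_almost
end

section
/- Almost representation theorem (compact group case): let K be compact with normalized Haar probability measure μ, and let T : K → L(E) be an almost σ-representation with finite σ-bound b(T) which is continuous for the operator norm on L(E). Then there exists a map R : K → L(E), continuous for the operator norm and A-semilinear, such that R(1) = id, σ(g,h)·R(gh) = R(g)∘R(h) for all g,h ∈ K (so R is a σ-representation; in particular every R(g) is invertible), and ‖R(g) − T(g)‖ ≤ 4·b(T)·r(T) for all g ∈ K. -/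
open MeasureTheory

/-!
For a pseudorepresentation `S` with invertible values let `P(g,h) = σ(g,h)·S(gh)S(h)⁻¹` and
average: `Φ(S)(g) = ∫ P(g,h) dμ(h)`. The cocycle identity makes `P` exactly twisted
multiplicative, `P(g,g'h)·P(g',h) = σ(g,g')·P(gg',h)`, so by left invariance of `μ` the defect of
`Φ(S)` is `∫ c(g,g'h)·c(g',h) dh − e(g)·e(g')`, where `c(g,h) = P(g,h) − S(g) = D(g,h)·S(h)⁻¹` and
`e = Φ(S) − S`; it is quadratic in the defect `D` of `S`. The inverses stay under control since
`S(g)S(g⁻¹)` is close to the unit `σ(g,g⁻¹)`. One step turns `T` into a pseudorepresentation with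
defect `O(b²r²)`; from then on the defect halves at each step and the iterates converge uniformly
to a σ-representation within `4·b·r` of `T`.
-/

open Filter Topology

namespace AlmostRepresentation

theorem isUnit_of_isUnit_mul_of_isUnit_mul {M : Type*} [Monoid M] {a b c : M}
    (hab : IsUnit (a * b)) (hca : IsUnit (c * a)) : IsUnit a := by
  obtain ⟨u, hu⟩ := hab
  obtain ⟨v, hv⟩ := hca
  have hr : a * (b * ↑u⁻¹) = 1 := by rw [← mul_assoc, ← hu, Units.mul_inv]
  have hl : ↑v⁻¹ * c * a = 1 := by rw [mul_assoc, ← hv, Units.inv_mul]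
  exact ⟨⟨a, b * ↑u⁻¹, hr, left_inv_eq_right_inv hl hr ▸ hl⟩, rfl⟩

theorem isUnit_of_norm_one_sub_lt {R : Type*} [NormedRing R] [HasSummableGeomSeries R] {x : R}
    (hx : ‖1 - x‖ < 1) : IsUnit x := by
  simpa using isUnit_one_sub_of_norm_lt_one hx

theorem norm_inverse_le_of_norm_one_sub_mul_lt {R : Type*} [NormedRing R] [HasSummableGeomSeries R]
    (hR : ‖(1 : R)‖ ≤ 1) {a z : R} (ha : IsUnit a) (hz : ‖1 - z * a‖ < 1) :
    ‖Ring.inverse a‖ ≤ ‖z‖ / (1 - ‖1 - z * a‖) := by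
  set t := 1 - z * a
  have hza : z * a = 1 - t := by simp [t]
  have hinv : Ring.inverse a = Ring.inverse (1 - t) * z :=
    calc Ring.inverse a = Ring.inverse (1 - t) * z * a * Ring.inverse a := by
          rw [mul_assoc _ z, hza, Ring.inverse_mul_cancel _ (isUnit_one_sub_of_norm_lt_one hz),
            one_mul]
      _ = Ring.inverse (1 - t) * z := Ring.mul_inverse_cancel_right _ _ ha
  have hgeom : ‖Ring.inverse (1 - t)‖ ≤ (1 - ‖t‖)⁻¹ := by
    rw [← geom_series_eq_inverse t hz]
    linarith [tsum_geometric_le_of_norm_lt_one t hz]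
  rw [hinv, div_eq_inv_mul]
  exact (norm_mul_le _ _).trans (mul_le_mul_of_nonneg_right hgeom (norm_nonneg _))

section Semilinear

variable {A E : Type*} [NormedRing A] [NormedAddCommGroup E] [NormedSpace ℝ E] [Module A E]

def IsSemilinear (φ : A → A) (F : E →L[ℝ] E) : Prop :=
  ∀ (a : A) (e : E), F (a • e) = φ a • F e

namespace IsSemilinear

variable {φ ψ χ : A → A} {F G : E →L[ℝ] E}

theorem mul (hF : IsSemilinear φ F) (hG : IsSemilinear ψ G) (h : ∀ a, φ (ψ a) = χ a) :
    IsSemilinear χ (F * G) :=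
  fun a e => by simp [mul_apply_eq_comp, hF _ _, hG a e, h]

theorem inverse (hF : IsSemilinear φ F) (hu : IsUnit F) (h : ∀ a, φ (ψ a) = a) :
    IsSemilinear ψ (Ring.inverse F) := fun a e =>
  calc Ring.inverse F (a • e) = Ring.inverse F (φ (ψ a) • F (Ring.inverse F e)) := by
        rw [h, ← mul_apply_eq_comp, Ring.mul_inverse_cancel _ hu, one_apply_eq_self]
    _ = ψ a • Ring.inverse F e := by
        rw [← hF, ← mul_apply_eq_comp, Ring.inverse_mul_cancel _ hu, one_apply_eq_self]

end IsSemilinear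

end Semilinear

section Operators

variable {A E : Type*} [NormedRing A] [NormedAddCommGroup E] [NormedSpace ℝ E] [Module A E]
  [SMulCommClass ℝ A E] [ContinuousConstSMul A E]

variable (E) in
noncomputable def smulOp : A →+* (E →L[ℝ] E) where
  toFun a := a • 1
  map_one' := one_smul _ _
  map_mul' a b := by ext e; simp [mul_smul]
  map_zero' := zero_smul _ _
  map_add' a b := add_smul _ _ _

theorem smul_eq_smulOp_mul (a : A) (F : E →L[ℝ] E) : a • F = smulOp E a * F := rfl

theorem norm_smul_op_le (hAE : ∀ (a : A) (e : E), ‖a • e‖ ≤ ‖a‖ * ‖e‖) (a : A)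
    (F : E →L[ℝ] E) :
    ‖a • F‖ ≤ ‖a‖ * ‖F‖ :=
  ContinuousLinearMap.opNorm_le_bound _ (by positivity) fun e =>
    calc ‖a • F e‖ ≤ ‖a‖ * ‖F e‖ := hAE _ _
      _ ≤ ‖a‖ * ‖F‖ * ‖e‖ := by rw [mul_assoc]; gcongr; exact F.le_opNorm e

theorem continuous_smulOp (hAE : ∀ (a : A) (e : E), ‖a • e‖ ≤ ‖a‖ * ‖e‖) :
    Continuous (smulOp E : A → E →L[ℝ] E) :=
  AddMonoidHomClass.continuous_of_bound (smulOp E) 1 fun a => by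
    rw [one_mul]
    exact (norm_smul_op_le hAE a 1).trans
      (mul_le_of_le_one_right (norm_nonneg a) ContinuousLinearMap.norm_id_le)

theorem _root_.Continuous.smul_op (hAE : ∀ (a : A) (e : E), ‖a • e‖ ≤ ‖a‖ * ‖e‖)
    {α : Type*} [TopologicalSpace α] {f : α → A} {F : α → E →L[ℝ] E} (hf : Continuous f)
    (hF : Continuous F) : Continuous fun x => f x • F x :=
  ((continuous_smulOp hAE).comp hf).mul hF

theorem isUnit_of_norm_one_sub_inverse_smul_lt [CompleteSpace E] {a : A} (ha : IsUnit a)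
    {F : E →L[ℝ] E} (h : ‖1 - Ring.inverse a • F‖ < 1) : IsUnit F := by
  have hF : F = smulOp E a * (Ring.inverse a • F) := by
    rw [smul_eq_smulOp_mul, ← mul_assoc, ← map_mul, Ring.mul_inverse_cancel _ ha, map_one,
      one_mul]
  rw [hF]
  exact (ha.map _).mul (isUnit_of_norm_one_sub_lt h)

theorem IsSemilinear.mul_smulOp {φ : A → A} {F : E →L[ℝ] E} (hF : IsSemilinear φ F)
    (a : A) :
    F * smulOp E a = smulOp E (φ a) * F := by
  ext e; exact hF a e

theorem IsSemilinear.smul {φ : A → A} {F : E →L[ℝ] E} (hF : IsSemilinear φ F) {c : A}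
    (hc : ∀ a, c * a = a * c) : IsSemilinear φ (c • F) :=
  fun a e => by simp [hF a e, smul_smul, hc]

end Operators

section Ell

variable {K A : Type*} [Group K] [NormedRing A]

theorem one_le_ell (σ : K → K → A) (g : K) : 1 ≤ ell σ g := le_max_left _ _

theorem ell_pos (σ : K → K → A) (g : K) : 0 < ell σ g := one_pos.trans_le (one_le_ell σ g)

theorem norm_inverse_le_ell (σ : K → K → A) (g : K) :
    ‖Ring.inverse (σ g g⁻¹)‖ ≤ ell σ g :=
  le_max_right _ _

theorem norm_le_ell_mul_norm {F : Type*} [SeminormedAddGroup F] (σ : K → K → A) (g : K)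
    (x : F) :
    ‖x‖ ≤ ell σ g * ‖x‖ :=
  le_mul_of_one_le_left (norm_nonneg x) (one_le_ell σ g)

end Ell

section Defect

variable {K A E : Type*} [Group K] [NormedRing A] [NormedAddCommGroup E] [NormedSpace ℝ E]
  [Module A E] [SMulCommClass ℝ A E] [ContinuousConstSMul A E]

def defect (σ : K → K → A) (S : K → E →L[ℝ] E) (g h : K) : E →L[ℝ] E :=
  σ g h • S (g * h) - S g * S h

noncomputable def averagingKernel (σ : K → K → A) (S : K → E →L[ℝ] E) (g h : K) :
    E →L[ℝ] E :=
  σ g h • (S (g * h) * Ring.inverse (S h))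

theorem averagingKernel_sub_eq {σ : K → K → A} {S : K → E →L[ℝ] E} {h : K} (hS : IsUnit (S h))
    (g : K) :
    averagingKernel σ S g h - S g = defect σ S g h * Ring.inverse (S h) := by
  rw [averagingKernel, defect, sub_mul, smul_eq_smulOp_mul, smul_eq_smulOp_mul, mul_assoc,
    Ring.mul_inverse_cancel_right _ _ hS]

theorem averagingKernel_mul {act : K → A → A} {σ : K → K → A} (hact_one : ∀ a, act 1 a = a)
    (hact_mul : ∀ g h a, act (g * h) a = act g (act h a))
    (hσ_central : ∀ g h a, σ g h * a = a * σ g h)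
    (hσ_cocycle : ∀ g h k, σ g h * σ (g * h) k = act g (σ h k) * σ g (h * k))
    {S : K → E →L[ℝ] E} (hS : ∀ g, IsSemilinear (act g) (S g)) (hu : ∀ g, IsUnit (S g))
    (g g' h : K) :
    averagingKernel σ S g (g' * h) * averagingKernel σ S g' h =
      σ g g' • averagingKernel σ S (g * g') h := by
  have hV : IsSemilinear (act (g' * h)⁻¹) (Ring.inverse (S (g' * h))) :=
    (hS _).inverse (hu _) fun a => by rw [← hact_mul, mul_inv_cancel, hact_one]
  have hσ : σ g (g' * h) * act g (σ g' h) = σ g g' * σ (g * g') h := by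
    rw [hσ_central, hσ_cocycle]
  simp only [averagingKernel, smul_eq_smulOp_mul]
  calc smulOp E (σ g (g' * h)) * (S (g * (g' * h)) * Ring.inverse (S (g' * h))) *
        (smulOp E (σ g' h) * (S (g' * h) * Ring.inverse (S h)))
      = smulOp E (σ g (g' * h)) * S (g * (g' * h)) *
          (Ring.inverse (S (g' * h)) * smulOp E (σ g' h)) * S (g' * h) * Ring.inverse (S h) := by
        noncomm_ring
    _ = smulOp E (σ g (g' * h)) * (S (g * (g' * h)) * smulOp E (act (g' * h)⁻¹ (σ g' h))) *
          (Ring.inverse (S (g' * h)) * S (g' * h)) * Ring.inverse (S h) := by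
        rw [hV.mul_smulOp]; noncomm_ring
    _ = smulOp E (σ g (g' * h) * act g (σ g' h)) * (S (g * g' * h) * Ring.inverse (S h)) := by
        rw [(hS _).mul_smulOp, Ring.inverse_mul_cancel _ (hu _), ← hact_mul,
          mul_inv_cancel_right, map_mul, mul_assoc g]
        noncomm_ring
    _ = smulOp E (σ g g') *
          (smulOp E (σ (g * g') h) * (S (g * g' * h) * Ring.inverse (S h))) := by
        rw [hσ, map_mul, mul_assoc]

theorem isSemilinear_averagingKernel {act : K → A → A} (hact_one : ∀ a, act 1 a = a)
    (hact_mul : ∀ g h a, act (g * h) a = act g (act h a)) {σ : K → K → A}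
    (hσ_central : ∀ g h a, σ g h * a = a * σ g h) {S : K → E →L[ℝ] E}
    (hS : ∀ g, IsSemilinear (act g) (S g)) (hu : ∀ g, IsUnit (S g)) (g h : K) :
    IsSemilinear (act g) (averagingKernel σ S g h) :=
  ((hS (g * h)).mul ((hS h).inverse (hu h) fun a => by rw [← hact_mul, mul_inv_cancel, hact_one])
    fun a => by rw [← hact_mul, mul_inv_cancel_right]).smul (hσ_central g h)

variable [TopologicalSpace K]

structure IsApproxRep (act : K → A → A) (σ : K → K → A) (β ρ δ : ℝ)
    (S : K → E →L[ℝ] E) : Prop where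
  continuous : Continuous S
  semilinear : ∀ g, IsSemilinear (act g) (S g)
  norm_le : ∀ g, ell σ g * ‖S g‖ ≤ β
  defect_le : ∀ g h, ell σ g * ‖defect σ S g h‖ ≤ ρ
  norm_one_sub_le : ‖1 - S 1‖ ≤ δ

end Defect

namespace IsApproxRep

variable {K A E : Type*} [Group K] [TopologicalSpace K] [NormedRing A] [NormedAddCommGroup E]
  [NormedSpace ℝ E] [Module A E] [SMulCommClass ℝ A E] [ContinuousConstSMul A E]
  {act : K → A → A} {σ : K → K → A} {β ρ δ : ℝ} {S : K → E →L[ℝ] E}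

theorem mono (hS : IsApproxRep act σ β ρ δ S) {β' ρ' δ' : ℝ} (hβ : β ≤ β')
    (hρ : ρ ≤ ρ') (hδ : δ ≤ δ') : IsApproxRep act σ β' ρ' δ' S where
  continuous := hS.continuous
  semilinear := hS.semilinear
  norm_le g := (hS.norm_le g).trans hβ
  defect_le g h := (hS.defect_le g h).trans hρ
  norm_one_sub_le := hS.norm_one_sub_le.trans hδ

theorem bound_nonneg (hS : IsApproxRep act σ β ρ δ S) : 0 ≤ β :=
  (mul_nonneg (ell_pos σ 1).le (norm_nonneg _)).trans (hS.norm_le 1)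

theorem defect_bound_nonneg (hS : IsApproxRep act σ β ρ δ S) : 0 ≤ ρ :=
  (mul_nonneg (ell_pos σ 1).le (norm_nonneg _)).trans (hS.defect_le 1 1)

theorem norm_one_sub_inverse_smul_mul_inv_le (hS : IsApproxRep act σ β ρ δ S)
    (hAE : ∀ (a : A) (e : E), ‖a • e‖ ≤ ‖a‖ * ‖e‖) {g : K} (hσ : IsUnit (σ g g⁻¹)) :
    ‖1 - Ring.inverse (σ g g⁻¹) • (S g * S g⁻¹)‖ ≤ δ + ρ := by
  have h : 1 - Ring.inverse (σ g g⁻¹) • (S g * S g⁻¹) =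
      (1 - S 1) + Ring.inverse (σ g g⁻¹) • defect σ S g g⁻¹ := by
    rw [defect, mul_inv_cancel, smul_sub, smul_smul, Ring.inverse_mul_cancel _ hσ, one_smul]
    abel
  rw [h]
  refine (norm_add_le _ _).trans (add_le_add hS.norm_one_sub_le ?_)
  calc ‖Ring.inverse (σ g g⁻¹) • defect σ S g g⁻¹‖
      ≤ ‖Ring.inverse (σ g g⁻¹)‖ * ‖defect σ S g g⁻¹‖ := norm_smul_op_le hAE _ _
    _ ≤ ell σ g * ‖defect σ S g g⁻¹‖ := by gcongr; exact norm_inverse_le_ell σ g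
    _ ≤ ρ := hS.defect_le g g⁻¹

variable [CompleteSpace E]

theorem isUnit (hS : IsApproxRep act σ β ρ δ S)
    (hAE : ∀ (a : A) (e : E), ‖a • e‖ ≤ ‖a‖ * ‖e‖)
    (hσ_unit : ∀ g h, IsUnit (σ g h)) (hε : δ + ρ < 1) (g : K) : IsUnit (S g) := by
  have key : ∀ k : K, IsUnit (S k * S k⁻¹) := fun k =>
    isUnit_of_norm_one_sub_inverse_smul_lt (hσ_unit k k⁻¹)
      ((hS.norm_one_sub_inverse_smul_mul_inv_le hAE (hσ_unit k k⁻¹)).trans_lt hε)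
  exact isUnit_of_isUnit_mul_of_isUnit_mul (key g) (by simpa using key g⁻¹)

theorem norm_inverse_le (hS : IsApproxRep act σ β ρ δ S)
    (hAE : ∀ (a : A) (e : E), ‖a • e‖ ≤ ‖a‖ * ‖e‖) (hσ_unit : ∀ g h, IsUnit (σ g h))
    (hε : δ + ρ < 1) (g : K) : ‖Ring.inverse (S g)‖ ≤ β / (1 - (δ + ρ)) := by
  set z := Ring.inverse (σ g⁻¹ g) • S g⁻¹
  have hz : ‖1 - z * S g‖ ≤ δ + ρ := by
    simpa [z, smul_eq_smulOp_mul, mul_assoc] using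
      hS.norm_one_sub_inverse_smul_mul_inv_le hAE (hσ_unit g⁻¹ g⁻¹⁻¹)
  have hz_norm : ‖z‖ ≤ β :=
    calc ‖z‖ ≤ ‖Ring.inverse (σ g⁻¹ g⁻¹⁻¹)‖ * ‖S g⁻¹‖ := by
          simpa using norm_smul_op_le hAE (Ring.inverse (σ g⁻¹ g)) (S g⁻¹)
      _ ≤ ell σ g⁻¹ * ‖S g⁻¹‖ := by gcongr; exact norm_inverse_le_ell σ g⁻¹
      _ ≤ β := hS.norm_le g⁻¹
  calc ‖Ring.inverse (S g)‖ ≤ ‖z‖ / (1 - ‖1 - z * S g‖) :=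
        norm_inverse_le_of_norm_one_sub_mul_lt (R := E →L[ℝ] E) ContinuousLinearMap.norm_id_le
          (hS.isUnit hAE hσ_unit hε g) (hz.trans_lt hε)
    _ ≤ β / (1 - (δ + ρ)) := div_le_div₀ hS.bound_nonneg hz_norm (by linarith) (by linarith)

theorem ell_mul_norm_averagingKernel_sub_le (hS : IsApproxRep act σ β ρ δ S)
    (hAE : ∀ (a : A) (e : E), ‖a • e‖ ≤ ‖a‖ * ‖e‖) (hσ_unit : ∀ g h, IsUnit (σ g h))
    (hε : δ + ρ < 1) (g h : K) :
    ell σ g * ‖averagingKernel σ S g h - S g‖ ≤ ρ * (β / (1 - (δ + ρ))) := by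
  rw [averagingKernel_sub_eq (hS.isUnit hAE hσ_unit hε h) g]
  calc ell σ g * ‖defect σ S g h * Ring.inverse (S h)‖
      ≤ ell σ g * ‖defect σ S g h‖ * ‖Ring.inverse (S h)‖ := by
        rw [mul_assoc]; exact mul_le_mul_of_nonneg_left (norm_mul_le _ _) (ell_pos σ g).le
    _ ≤ ρ * (β / (1 - (δ + ρ))) :=
        mul_le_mul (hS.defect_le g h) (hS.norm_inverse_le hAE hσ_unit hε h) (norm_nonneg _)
          hS.defect_bound_nonneg

end IsApproxRep

section Integral

variable {α : Type*} [MeasurableSpace α] {ν : Measure α}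

theorem IsSemilinear.integral {A E : Type*} [NormedRing A] [NormedAddCommGroup E]
    [NormedSpace ℝ E] [CompleteSpace E] [Module A E] [SMulCommClass ℝ A E]
    [ContinuousConstSMul A E] {φ : A → A} {F : α → E →L[ℝ] E}
    (hF : ∀ x, IsSemilinear φ (F x)) (hint : Integrable F ν) :
    IsSemilinear φ (∫ x, F x ∂ν) := fun a e => by
  rw [ContinuousLinearMap.integral_apply hint, ContinuousLinearMap.integral_apply hint,
    integral_congr_ae (Eventually.of_forall fun x => hF x a e)]
  exact (smulOp E (φ a)).integral_comp_comm
    ((ContinuousLinearMap.apply ℝ E e).integrable_comp hint)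

variable [IsProbabilityMeasure ν]

theorem norm_integral_le_of_forall_norm_le {Y : Type*} [NormedAddCommGroup Y] [NormedSpace ℝ Y]
    {f : α → Y} {C : ℝ} (h : ∀ x, ‖f x‖ ≤ C) : ‖∫ x, f x ∂ν‖ ≤ C := by
  simpa using norm_integral_le_of_norm_le_const (μ := ν) (Eventually.of_forall h)

theorem integral_sub_mul_sub_sub_eq {R : Type*} [NormedRing R] [NormedAlgebra ℝ R]
    [CompleteSpace R] {U V : α → R}
    (hU : Integrable U ν) (hV : Integrable V ν) (hUV : Integrable (fun x => U x * V x) ν)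
    (a b : R) :
    ∫ x, (U x - a) * (V x - b) ∂ν - (∫ x, U x ∂ν - a) * (∫ x, V x ∂ν - b) =
      ∫ x, U x * V x ∂ν - (∫ x, U x ∂ν) * ∫ x, V x ∂ν := by
  have h : ∀ x, (U x - a) * (V x - b) = U x * V x - U x * b - (a * V x - a * b) := fun x => by
    noncomm_ring
  have h₁ : Integrable (fun x => U x * V x - U x * b) ν := hUV.sub (hU.mul_const b)
  have h₂ : Integrable (fun x => a * V x - a * b) ν := (hV.const_mul a).sub (integrable_const _)
  simp_rw [h]
  rw [integral_sub h₁ h₂, integral_sub hUV (hU.mul_const b),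
    integral_sub (hV.const_mul a) (integrable_const _),
    integral_mul_const_of_integrable hU, integral_const_mul_of_integrable hV, integral_const]
  simp only [probReal_univ, one_smul]
  noncomm_ring

end Integral

section CompactSpace

variable {K : Type*} [TopologicalSpace K] [CompactSpace K] [MeasurableSpace K]
  [OpensMeasurableSpace K] {μ : Measure K}

theorem _root_.Continuous.integrable_of_compactSpace [IsFiniteMeasure μ] {Y : Type*}
    [NormedAddCommGroup Y] {f : K → Y} (hf : Continuous f) : Integrable f μ :=
  hf.integrable_of_hasCompactSupport (HasCompactSupport.of_compactSpace f)

theorem continuous_integral_of_continuous_uncurry [IsProbabilityMeasure μ] {L Y : Type*}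
    [TopologicalSpace L] [NormedAddCommGroup Y] [NormedSpace ℝ Y] {G : L → K → Y}
    (hG : Continuous (Function.uncurry G)) : Continuous fun x => ∫ y, G x y ∂μ := by
  have hlip : LipschitzWith 1 fun φ : C(K, Y) => ∫ y, φ y ∂μ :=
    LipschitzWith.of_dist_le_mul fun φ ψ => by
      rw [NNReal.coe_one, one_mul, dist_eq_norm, ← integral_sub
        φ.continuous.integrable_of_compactSpace ψ.continuous.integrable_of_compactSpace]
      exact norm_integral_le_of_forall_norm_le fun y => by
        rw [← dist_eq_norm]; exact φ.dist_apply_le_dist y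
  exact hlip.continuous.comp (ContinuousMap.curry ⟨_, hG⟩).continuous

end CompactSpace

section Average

variable {K A E : Type*} [Group K] [NormedRing A] [NormedAddCommGroup E] [NormedSpace ℝ E]
  [CompleteSpace E] [Module A E] [SMulCommClass ℝ A E] [ContinuousConstSMul A E]

noncomputable def average [MeasurableSpace K] (μ : Measure K) (σ : K → K → A)
    (S : K → E →L[ℝ] E) (g : K) : E →L[ℝ] E :=
  ∫ h, averagingKernel σ S g h ∂μ

theorem average_one [MeasurableSpace K] (μ : Measure K) [IsProbabilityMeasure μ]
    {σ : K → K → A} {S : K → E →L[ℝ] E} (hσ_one : ∀ h, σ 1 h = 1) (hu : ∀ g, IsUnit (S g)) :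
    average μ σ S 1 = 1 := by
  simp [average, averagingKernel, hσ_one, Ring.mul_inverse_cancel _ (hu _)]

variable [TopologicalSpace K]

theorem continuous_averagingKernel [IsTopologicalGroup K]
    (hAE : ∀ (a : A) (e : E), ‖a • e‖ ≤ ‖a‖ * ‖e‖)
    {σ : K → K → A} (hσ_cont : Continuous fun p : K × K => σ p.1 p.2)
    {S : K → E →L[ℝ] E} (hS : Continuous S) (hu : ∀ g, IsUnit (S g)) :
    Continuous (Function.uncurry (averagingKernel σ S)) := by
  have hV : Continuous fun g => Ring.inverse (S g) :=
    continuous_iff_continuousAt.2 fun g =>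
      ((hu g).unit_spec ▸ NormedRing.inverse_continuousAt (hu g).unit).comp hS.continuousAt
  exact hσ_cont.smul_op hAE ((hS.comp continuous_mul).mul (hV.comp continuous_snd))

variable [CompactSpace K] [MeasurableSpace K] [BorelSpace K] (μ : Measure K)
  [IsProbabilityMeasure μ] {σ : K → K → A} {S : K → E →L[ℝ] E}

theorem average_sub_eq (hK : Continuous (Function.uncurry (averagingKernel σ S))) (g : K) :
    average μ σ S g - S g = ∫ h, (averagingKernel σ S g h - S g) ∂μ := by
  have hint : Integrable (fun h => averagingKernel σ S g h) μ :=
    (hK.comp (Continuous.prodMk_right g)).integrable_of_compactSpace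
  rw [integral_sub hint (integrable_const _), integral_const, probReal_univ, one_smul]
  rfl

theorem defect_average_eq [IsTopologicalGroup K] [μ.IsMulLeftInvariant]
    (hK : Continuous (Function.uncurry (averagingKernel σ S)))
    (hmul : ∀ g g' h, averagingKernel σ S g (g' * h) * averagingKernel σ S g' h =
      σ g g' • averagingKernel σ S (g * g') h) (g g' : K) :
    defect σ (average μ σ S) g g' =
      ∫ h, (averagingKernel σ S g (g' * h) - S g) * (averagingKernel σ S g' h - S g') ∂μ -
        (average μ σ S g - S g) * (average μ σ S g' - S g') := by
  have hU : Continuous fun h => averagingKernel σ S g (g' * h) :=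
    hK.comp (continuous_const.prodMk (continuous_const.mul continuous_id))
  have hV : Continuous fun h => averagingKernel σ S g' h := hK.comp (Continuous.prodMk_right g')
  have hU_avg : ∫ h, averagingKernel σ S g (g' * h) ∂μ = average μ σ S g :=
    integral_mul_left_eq_self (fun h => averagingKernel σ S g h) g'
  have hσ_avg : σ g g' • average μ σ S (g * g') =
      ∫ h, averagingKernel σ S g (g' * h) * averagingKernel σ S g' h ∂μ := by
    simp_rw [hmul, smul_eq_smulOp_mul]
    exact (integral_const_mul_of_integrable
      (hK.comp (Continuous.prodMk_right (g * g'))).integrable_of_compactSpace).symm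
  have key := integral_sub_mul_sub_sub_eq (ν := μ) hU.integrable_of_compactSpace
    hV.integrable_of_compactSpace (hU.mul hV).integrable_of_compactSpace (S g) (S g')
  rw [hU_avg] at key
  rw [defect, hσ_avg]
  exact key.symm

end Average

namespace IsApproxRep

variable {K A E : Type*} [Group K] [TopologicalSpace K] [IsTopologicalGroup K] [CompactSpace K]
  [MeasurableSpace K] [BorelSpace K] {μ : Measure K} [IsProbabilityMeasure μ]
  [NormedRing A] [NormedAddCommGroup E] [NormedSpace ℝ E] [CompleteSpace E] [Module A E]
  [SMulCommClass ℝ A E] [ContinuousConstSMul A E]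
  {act : K → A → A} {σ : K → K → A} {β ρ δ : ℝ} {S : K → E →L[ℝ] E}

theorem ell_mul_norm_average_sub_le (hS : IsApproxRep act σ β ρ δ S)
    (hAE : ∀ (a : A) (e : E), ‖a • e‖ ≤ ‖a‖ * ‖e‖)
    (hσ_cont : Continuous fun p : K × K => σ p.1 p.2) (hσ_unit : ∀ g h, IsUnit (σ g h))
    (hε : δ + ρ < 1) (g : K) :
    ell σ g * ‖average μ σ S g - S g‖ ≤ ρ * (β / (1 - (δ + ρ))) := by
  rw [average_sub_eq μ (continuous_averagingKernel hAE hσ_cont hS.continuous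
    (hS.isUnit hAE hσ_unit hε)), ← le_div_iff₀' (ell_pos σ g)]
  exact norm_integral_le_of_forall_norm_le fun h =>
    (le_div_iff₀' (ell_pos σ g)).2 (hS.ell_mul_norm_averagingKernel_sub_le hAE hσ_unit hε g h)

theorem isApproxRep_average [μ.IsMulLeftInvariant] (hS : IsApproxRep act σ β ρ δ S)
    (hAE : ∀ (a : A) (e : E), ‖a • e‖ ≤ ‖a‖ * ‖e‖)
    (hact_one : ∀ a, act 1 a = a) (hact_mul : ∀ g h a, act (g * h) a = act g (act h a))
    (hσ_cont : Continuous fun p : K × K => σ p.1 p.2) (hσ_unit : ∀ g h, IsUnit (σ g h))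
    (hσ_central : ∀ g h a, σ g h * a = a * σ g h) (hσ_one : ∀ h, σ 1 h = 1)
    (hσ_cocycle : ∀ g h k, σ g h * σ (g * h) k = act g (σ h k) * σ g (h * k))
    (hε : δ + ρ < 1) :
    IsApproxRep act σ (β + ρ * (β / (1 - (δ + ρ)))) (2 * (ρ * (β / (1 - (δ + ρ)))) ^ 2) 0
      (average μ σ S) := by
  set s := ρ * (β / (1 - (δ + ρ)))
  have hu := hS.isUnit hAE hσ_unit hε
  have hK := continuous_averagingKernel hAE hσ_cont hS.continuous hu
  have hkernel : ∀ g h, ell σ g * ‖averagingKernel σ S g h - S g‖ ≤ s :=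
    hS.ell_mul_norm_averagingKernel_sub_le hAE hσ_unit hε
  have hdist : ∀ g, ell σ g * ‖average μ σ S g - S g‖ ≤ s :=
    hS.ell_mul_norm_average_sub_le hAE hσ_cont hσ_unit hε
  refine ⟨continuous_integral_of_continuous_uncurry hK, fun g => ?_, fun g => ?_, fun g g' => ?_,
    ?_⟩
  · exact IsSemilinear.integral
      (isSemilinear_averagingKernel hact_one hact_mul hσ_central hS.semilinear hu g)
      (hK.comp (Continuous.prodMk_right g)).integrable_of_compactSpace
  · calc ell σ g * ‖average μ σ S g‖
          ≤ ell σ g * ‖S g‖ + ell σ g * ‖average μ σ S g - S g‖ := by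
          rw [← mul_add]; exact mul_le_mul_of_nonneg_left (norm_le_insert' _ _) (ell_pos σ g).le
      _ ≤ β + s := add_le_add (hS.norm_le g) (hdist g)
  · rw [defect_average_eq μ hK
      (averagingKernel_mul hact_one hact_mul hσ_central hσ_cocycle hS.semilinear hu)]
    have h₁ : ‖∫ h, (averagingKernel σ S g (g' * h) - S g) *
        (averagingKernel σ S g' h - S g') ∂μ‖ ≤ s / ell σ g * s :=
      norm_integral_le_of_forall_norm_le fun h =>
        norm_mul_le_of_le ((le_div_iff₀' (ell_pos σ g)).2 (hkernel g _))
          ((norm_le_ell_mul_norm σ g' _).trans (hkernel g' h))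
    have h₂ :
        ‖(average μ σ S g - S g) * (average μ σ S g' - S g')‖ ≤ s / ell σ g * s :=
      norm_mul_le_of_le ((le_div_iff₀' (ell_pos σ g)).2 (hdist g))
        ((norm_le_ell_mul_norm σ g' _).trans (hdist g'))
    calc ell σ g * ‖_ - _‖ ≤ ell σ g * (s / ell σ g * s + s / ell σ g * s) :=
          mul_le_mul_of_nonneg_left ((norm_sub_le _ _).trans (add_le_add h₁ h₂))
            (ell_pos σ g).le
      _ = 2 * s ^ 2 := by field_simp [(ell_pos σ g).ne']; ring
  · rw [average_one μ hσ_one hu, sub_self, norm_zero]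

end IsApproxRep

section SigmaRep

variable {K A E : Type*} [Group K] [TopologicalSpace K] [NormedRing A] [NormedAddCommGroup E]
  [NormedSpace ℝ E] [Module A E] [SMulCommClass ℝ A E] [ContinuousConstSMul A E]

structure IsSigmaRep (act : K → A → A) (σ : K → K → A) (R : K → E →L[ℝ] E) : Prop where
  continuous : Continuous R
  semilinear : ∀ g, IsSemilinear (act g) (R g)
  map_one : R 1 = 1
  map_mul : ∀ g h, σ g h • R (g * h) = R g * R h

theorem IsSigmaRep.isUnit {act : K → A → A} {σ : K → K → A} {R : K → E →L[ℝ] E}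
    (hR : IsSigmaRep act σ R) (hσ_unit : ∀ g h, IsUnit (σ g h)) (g : K) : IsUnit (R g) := by
  have key : ∀ k : K, IsUnit (R k * R k⁻¹) := fun k => by
    rw [← hR.map_mul, mul_inv_cancel, hR.map_one, smul_eq_smulOp_mul, mul_one]
    exact (hσ_unit k k⁻¹).map _
  exact isUnit_of_isUnit_mul_of_isUnit_mul (key g) (by simpa using key g⁻¹)

theorem exists_isSigmaRep_of_tendsto [CompleteSpace E] {act : K → A → A} {σ : K → K → A}
    {S : ℕ → K → E →L[ℝ] E} {C r : ℝ} (hr₀ : 0 ≤ r) (hr : r < 1)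
    (hcont : ∀ n, Continuous (S n)) (hsemi : ∀ n g, IsSemilinear (act g) (S n g))
    (hone : ∀ n, S n 1 = 1)
    (hdist : ∀ n g, ‖S (n + 1) g - S n g‖ ≤ C * r ^ n)
    (hdefect : ∀ g h, Tendsto (fun n => defect σ (S n) g h) atTop (𝓝 0)) :
    ∃ R, IsSigmaRep act σ R ∧ ∀ g, ‖R g - S 0 g‖ ≤ C / (1 - r) := by
  have hdist' : ∀ g n, dist (S n g) (S (n + 1) g) ≤ C * r ^ n := fun g n => by
    rw [dist_comm, dist_eq_norm]; exact hdist n g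
  choose R hR using fun g =>
    cauchySeq_tendsto_of_complete (cauchySeq_of_le_geometric r C hr (hdist' g))
  have htail : ∀ n g, dist (S n g) (R g) ≤ C * r ^ n / (1 - r) := fun n g =>
    dist_le_of_le_geometric_of_tendsto r C hr (hdist' g) (hR g) n
  have happ : ∀ g x, Tendsto (fun n => S n g x) atTop (𝓝 (R g x)) := fun g x =>
    ((ContinuousLinearMap.apply ℝ E x).continuous.tendsto (R g)).comp (hR g)
  refine ⟨R, ⟨?_, fun g a e => ?_, ?_, fun g h => ?_⟩, fun g => ?_⟩
  · refine TendstoUniformly.continuous (p := atTop) ?_ (Eventually.of_forall hcont).frequently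
    have h0 : Tendsto (fun n => C * r ^ n / (1 - r)) atTop (𝓝 0) := by
      simpa using ((tendsto_pow_atTop_nhds_zero_of_lt_one hr₀ hr).const_mul C).div_const (1 - r)
    refine Metric.tendstoUniformly_iff.2 fun ε hε => ?_
    filter_upwards [h0.eventually (gt_mem_nhds hε)] with n hn g
    rw [dist_comm]
    exact (htail n g).trans_lt hn
  · exact tendsto_nhds_unique (happ g (a • e))
      (((happ g e).const_smul (act g a)).congr fun n => (hsemi n g a e).symm)
  · exact tendsto_nhds_unique (hR 1) (by simp [hone])
  · refine sub_eq_zero.1 (tendsto_nhds_unique ?_ (hdefect g h))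
    exact ((hR (g * h)).const_smul (σ g h)).sub ((hR g).mul (hR h))
  · rw [← dist_eq_norm, dist_comm]
    simpa using htail 0 g

end SigmaRep

namespace IsApproxRep

variable {K A E : Type*} [Group K] [TopologicalSpace K] [IsTopologicalGroup K] [CompactSpace K]
  [MeasurableSpace K] [BorelSpace K] [NormedRing A] [NormedAddCommGroup E] [NormedSpace ℝ E]
  [CompleteSpace E] [Module A E] [SMulCommClass ℝ A E] [ContinuousConstSMul A E]
  {act : K → A → A} {σ : K → K → A} {ρ c : ℝ} {S : K → E →L[ℝ] E}

section

variable {μ : Measure K} [μ.IsMulLeftInvariant] [IsProbabilityMeasure μ]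

theorem average_of_contracting {M ρ₀ : ℝ} (hS : IsApproxRep act σ (M - 2 * c * ρ) ρ 0 S)
    (hAE : ∀ (a : A) (e : E), ‖a • e‖ ≤ ‖a‖ * ‖e‖)
    (hact_one : ∀ a, act 1 a = a) (hact_mul : ∀ g h a, act (g * h) a = act g (act h a))
    (hσ_cont : Continuous fun p : K × K => σ p.1 p.2) (hσ_unit : ∀ g h, IsUnit (σ g h))
    (hσ_central : ∀ g h a, σ g h * a = a * σ g h) (hσ_one : ∀ h, σ 1 h = 1)
    (hσ_cocycle : ∀ g h k, σ g h * σ (g * h) k = act g (σ h k) * σ g (h * k))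
    (hc : 0 ≤ c) (hρρ₀ : ρ ≤ ρ₀) (hρ₀ : ρ₀ < 1) (hM : M ≤ c * (1 - ρ₀))
    (hcρ₀ : 4 * c ^ 2 * ρ₀ ≤ 1) :
    IsApproxRep act σ (M - 2 * c * (ρ / 2)) (ρ / 2) 0 (average μ σ S) ∧
      ∀ g, ‖average μ σ S g - S g‖ ≤ c * ρ := by
  have hρ := hS.defect_bound_nonneg
  have hε : 0 + ρ < 1 := by linarith
  set B := (M - 2 * c * ρ) / (1 - (0 + ρ))
  have hB : B ≤ c := by
    rw [div_le_iff₀ (by linarith)]; nlinarith [mul_nonneg hc hρ]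
  have hB₀ : 0 ≤ B := div_nonneg hS.bound_nonneg (by linarith)
  have hs : ρ * B ≤ c * ρ := by rw [mul_comm c]; gcongr
  refine ⟨(hS.isApproxRep_average hAE hact_one hact_mul hσ_cont hσ_unit hσ_central hσ_one
    hσ_cocycle hε).mono (by linarith) ?_ le_rfl, fun g => ?_⟩
  · nlinarith [pow_le_pow_left₀ (mul_nonneg hρ hB₀) hs 2, mul_le_mul_of_nonneg_left hρρ₀
      (by positivity : 0 ≤ 4 * c ^ 2 * ρ)]
  · exact (norm_le_ell_mul_norm σ g _).trans
      ((hS.ell_mul_norm_average_sub_le hAE hσ_cont hσ_unit hε g).trans hs)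

/- `βₙ + 2cρₙ` stays equal to `β + 2cρ` while `ρₙ` halves, which keeps the inverses of the
iterates bounded by `c`. -/
theorem iterate_average {β : ℝ} (hS : IsApproxRep act σ β ρ 0 S)
    (hAE : ∀ (a : A) (e : E), ‖a • e‖ ≤ ‖a‖ * ‖e‖)
    (hact_one : ∀ a, act 1 a = a) (hact_mul : ∀ g h a, act (g * h) a = act g (act h a))
    (hσ_cont : Continuous fun p : K × K => σ p.1 p.2) (hσ_unit : ∀ g h, IsUnit (σ g h))
    (hσ_central : ∀ g h a, σ g h * a = a * σ g h) (hσ_one : ∀ h, σ 1 h = 1)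
    (hσ_cocycle : ∀ g h k, σ g h * σ (g * h) k = act g (σ h k) * σ g (h * k))
    (hc : 0 ≤ c) (hρ : ρ < 1) (hβ : β + 2 * c * ρ ≤ c * (1 - ρ))
    (hcρ : 4 * c ^ 2 * ρ ≤ 1) (n : ℕ) :
    IsApproxRep act σ (β + 2 * c * ρ - 2 * c * (ρ * (1 / 2) ^ n)) (ρ * (1 / 2) ^ n) 0
      ((average μ σ)^[n] S) := by
  induction n with
  | zero => simpa using hS
  | succ n ih =>
    rw [Function.iterate_succ_apply', show ρ * (1 / 2) ^ (n + 1) = ρ * (1 / 2) ^ n / 2 by ring]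
    exact (ih.average_of_contracting (μ := μ) hAE hact_one hact_mul hσ_cont hσ_unit hσ_central
      hσ_one hσ_cocycle hc (mul_le_of_le_one_right hS.defect_bound_nonneg
        (pow_le_one₀ (by norm_num) (by norm_num))) hρ hβ hcρ).1

end

theorem exists_isSigmaRep (μ : Measure K) [μ.IsMulLeftInvariant] [IsProbabilityMeasure μ]
    {β : ℝ} (hS : IsApproxRep act σ β ρ 0 S)
    (hAE : ∀ (a : A) (e : E), ‖a • e‖ ≤ ‖a‖ * ‖e‖)
    (hact_one : ∀ a, act 1 a = a) (hact_mul : ∀ g h a, act (g * h) a = act g (act h a))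
    (hσ_cont : Continuous fun p : K × K => σ p.1 p.2) (hσ_unit : ∀ g h, IsUnit (σ g h))
    (hσ_central : ∀ g h a, σ g h * a = a * σ g h) (hσ_one : ∀ h, σ 1 h = 1)
    (hσ_cocycle : ∀ g h k, σ g h * σ (g * h) k = act g (σ h k) * σ g (h * k))
    (hc : 0 ≤ c) (hρ : ρ < 1) (hβ : β + 2 * c * ρ ≤ c * (1 - ρ))
    (hcρ : 4 * c ^ 2 * ρ ≤ 1) :
    ∃ R, IsSigmaRep act σ R ∧ ∀ g, ‖R g - S g‖ ≤ 2 * c * ρ := by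
  have hT := hS.iterate_average (μ := μ) hAE hact_one hact_mul hσ_cont hσ_unit hσ_central
    hσ_one hσ_cocycle hc hρ hβ hcρ
  obtain ⟨R, hR, hdist⟩ := exists_isSigmaRep_of_tendsto (S := fun n => (average μ σ)^[n] S)
    (C := c * ρ) (by norm_num : (0 : ℝ) ≤ 1 / 2) (by norm_num) (fun n => (hT n).continuous)
    (fun n => (hT n).semilinear)
    (fun n => (sub_eq_zero.1 (norm_le_zero_iff.1 (hT n).norm_one_sub_le)).symm)
    (fun n g => by
      rw [Function.iterate_succ_apply', mul_assoc]
      exact ((hT n).average_of_contracting hAE hact_one hact_mul hσ_cont hσ_unit hσ_central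
        hσ_one hσ_cocycle hc (mul_le_of_le_one_right hS.defect_bound_nonneg
          (pow_le_one₀ (by norm_num) (by norm_num))) hρ hβ hcρ).2 g)
    (fun g h => squeeze_zero_norm (fun n => (norm_le_ell_mul_norm σ g _).trans
        ((hT n).defect_le g h))
      (by simpa using (tendsto_pow_atTop_nhds_zero_of_lt_one (by norm_num : (0 : ℝ) ≤ 1 / 2)
        (by norm_num)).const_mul ρ))
  refine ⟨R, hR, fun g => ?_⟩
  have := hdist g
  norm_num at this
  linarith

theorem exists_isSigmaRep_of_small (μ : Measure K) [μ.IsMulLeftInvariant]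
    [IsProbabilityMeasure μ] {β δ : ℝ} (hS : IsApproxRep act σ β ρ δ S)
    (hAE : ∀ (a : A) (e : E), ‖a • e‖ ≤ ‖a‖ * ‖e‖)
    (hact_one : ∀ a, act 1 a = a) (hact_mul : ∀ g h a, act (g * h) a = act g (act h a))
    (hσ_cont : Continuous fun p : K × K => σ p.1 p.2) (hσ_unit : ∀ g h, IsUnit (σ g h))
    (hσ_central : ∀ g h a, σ g h * a = a * σ g h) (hσ_one : ∀ h, σ 1 h = 1)
    (hσ_cocycle : ∀ g h k, σ g h * σ (g * h) k = act g (σ h k) * σ g (h * k))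
    (hr : δ + ρ ≤ 1 / 4) (hβr : β ^ 2 * (δ + ρ) ≤ 1 / 9) :
    ∃ R, IsSigmaRep act σ R ∧ ∀ g, ‖R g - S g‖ ≤ 4 * β * (δ + ρ) := by
  set r := δ + ρ
  have hρ := hS.defect_bound_nonneg
  have hβ := hS.bound_nonneg
  have hδ : 0 ≤ δ := (norm_nonneg _).trans hS.norm_one_sub_le
  have hε : r < 1 := by linarith
  have hB : β / (1 - r) ≤ 4 / 3 * β := by rw [div_le_iff₀ (by linarith)]; nlinarith
  have hs₀ : 0 ≤ ρ * (β / (1 - r)) := mul_nonneg hρ (div_nonneg hβ (by linarith))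
  have hs : ρ * (β / (1 - r)) ≤ 4 / 3 * β * r := by
    rw [mul_comm _ r]
    exact mul_le_mul (by linarith) hB (div_nonneg hβ (by linarith)) (by linarith)
  have hβr' : β * r ≤ β / 4 := by nlinarith
  have hβr₂ : (β ^ 2 * r) ^ 2 ≤ (1 / 9) ^ 2 := pow_le_pow_left₀ (by positivity) hβr 2
  -- After one step the bound is `4β/3` and the defect `32β²r²/9`; then `c = 9β/4` works.
  have hS₁ := (hS.isApproxRep_average (μ := μ) hAE hact_one hact_mul hσ_cont hσ_unit
    hσ_central hσ_one hσ_cocycle hε).mono (β' := 4 / 3 * β) (ρ' := 32 / 9 * β ^ 2 * r ^ 2)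
    (by linarith) (by nlinarith [pow_le_pow_left₀ hs₀ hs 2]) le_rfl
  obtain ⟨R, hR, hdist⟩ := hS₁.exists_isSigmaRep μ (c := 9 / 4 * β) hAE hact_one hact_mul
    hσ_cont hσ_unit hσ_central hσ_one hσ_cocycle (by positivity) (by nlinarith) (by nlinarith)
    (by nlinarith)
  refine ⟨R, hR, fun g => ?_⟩
  calc ‖R g - S g‖ ≤ ‖R g - average μ σ S g‖ + ‖average μ σ S g - S g‖ :=
        norm_sub_le_norm_sub_add_norm_sub _ _ _
    _ ≤ 2 * (9 / 4 * β) * (32 / 9 * β ^ 2 * r ^ 2) + 4 / 3 * β * r :=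
        add_le_add (hdist g) ((norm_le_ell_mul_norm σ g _).trans
          ((hS.ell_mul_norm_average_sub_le hAE hσ_cont hσ_unit hε g).trans hs))
    _ ≤ 4 * β * r := by nlinarith

end IsApproxRep

theorem isApproxRep_sigmaBound_sigmaDefect {K A E : Type*} [Group K] [TopologicalSpace K]
    [NormedRing A] [NormedAddCommGroup E] [NormedSpace ℝ E] [Module A E] [SMulCommClass ℝ A E]
    [ContinuousConstSMul A E] {act : K → A → A} {σ : K → K → A} {T : K → E →L[ℝ] E}
    (hT_cont : Continuous T) (hT_semilinear : ∀ g, IsSemilinear (act g) (T g))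
    (hb_fin : BddAbove (Set.range fun g : K => ell σ g * ‖T g‖))
    (hr_fin : BddAbove (Set.range fun p : K × K =>
      ell σ p.1 * ‖σ p.1 p.2 • T (p.1 * p.2) - (T p.1).comp (T p.2)‖)) :
    IsApproxRep act σ (sigmaBound σ T) (sigmaDefect σ T - ‖1 - T 1‖) ‖1 - T 1‖ T where
  continuous := hT_cont
  semilinear := hT_semilinear
  norm_le g := le_ciSup hb_fin g
  defect_le g h := by
    rw [sigmaDefect, add_sub_cancel_left]
    exact le_ciSup hr_fin (g, h)
  norm_one_sub_le := le_rfl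

end AlmostRepresentation

theorem almost_representation_theorem_general
    {K A E : Type*} [Group K] [TopologicalSpace K] [IsTopologicalGroup K]
    [CompactSpace K] [MeasurableSpace K] [BorelSpace K]
    (μ : Measure K) [μ.IsHaarMeasure] [IsProbabilityMeasure μ]
    -- `A` is a unital real Banach algebra
    [NormedRing A]
    -- `E` is a real Banach space which is an `A`-module
    [NormedAddCommGroup E] [NormedSpace ℝ E] [CompleteSpace E]
    [Module A E] [SMulCommClass ℝ A E] [ContinuousConstSMul A E]
    (hAE : ∀ (a : A) (e : E), ‖a • e‖ ≤ ‖a‖ * ‖e‖)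
    -- the action of `K` on `A` by unital isometric algebra automorphisms
    (act : K → A → A)
    (hact_one : ∀ a, act 1 a = a)
    (hact_mul : ∀ g h a, act (g * h) a = act g (act h a))
    -- `σ` is an `A`-valued multiplier for `K`
    (σ : K → K → A)
    (hσ_cont : Continuous fun p : K × K => σ p.1 p.2)
    (hσ_unit : ∀ g h, IsUnit (σ g h))
    (hσ_central : ∀ g h a, σ g h * a = a * σ g h)
    (hσ_normal₁ : ∀ h, σ 1 h = 1)
    (hσ_cocycle : ∀ g h k, σ g h * σ (g * h) k = act g (σ h k) * σ g (h * k))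
    -- `T` is an operator-norm continuous `A`-semilinear pseudorepresentation
    (T : K → E →L[ℝ] E)
    (hT_cont : Continuous T)
    (hT_semilinear : ∀ g (a : A) (e : E), T g (a • e) = act g a • T g e)
    -- the σ-bound is finite and the σ-defect is finite
    (hb_fin : BddAbove (Set.range fun g : K => ell σ g * ‖T g‖))
    (hr_fin : BddAbove (Set.range fun p : K × K =>
      ell σ p.1 * ‖σ p.1 p.2 • T (p.1 * p.2) - (T p.1).comp (T p.2)‖))
    -- `T` is an almost σ-representation
    (h_almost : sigmaDefect σ T ≤ min (1 / 4) (1 / (9 * (sigmaBound σ T) ^ 2))) :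
    ∃ R : K → E →L[ℝ] E,
      Continuous R ∧
      (∀ g (a : A) (e : E), R g (a • e) = act g a • R g e) ∧
      R 1 = 1 ∧
      (∀ g h : K, σ g h • R (g * h) = (R g).comp (R h)) ∧
      (∀ g : K, IsUnit (R g)) ∧
      ∀ g : K, ‖R g - T g‖ ≤ 4 * sigmaBound σ T * sigmaDefect σ T := by
  have hT := AlmostRepresentation.isApproxRep_sigmaBound_sigmaDefect (act := act) hT_cont
    hT_semilinear hb_fin hr_fin
  have hr : ‖1 - T 1‖ + (sigmaDefect σ T - ‖1 - T 1‖) = sigmaDefect σ T := add_sub_cancel _ _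
  have hr₄ : sigmaDefect σ T ≤ 1 / 4 := h_almost.trans (min_le_left _ _)
  have hbr : sigmaBound σ T ^ 2 * sigmaDefect σ T ≤ 1 / 9 := by
    rcases (sq_nonneg (sigmaBound σ T)).eq_or_lt with hb | hb
    · rw [← hb, zero_mul]; norm_num
    · have h := h_almost.trans (min_le_right _ _)
      rw [le_div_iff₀ (by positivity)] at h
      linarith
  obtain ⟨R, hR, hdist⟩ := hT.exists_isSigmaRep_of_small μ hAE hact_one hact_mul hσ_cont
    hσ_unit hσ_central hσ_normal₁ hσ_cocycle (by rwa [hr]) (by rwa [hr])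
  exact ⟨R, hR.continuous, hR.semilinear, hR.map_one, hR.map_mul, hR.isUnit hσ_unit,
    fun g => (hdist g).trans_eq (by rw [hr])⟩

/-- Almost representation theorem, compact group case: any operator-norm continuous
almost σ-representation `T` of a compact group `K` on a Banach `A`-module `E` lies
within a distance of `4·b(T)·r(T)` from an actual operator-norm continuous
σ-representation `R` of `K` on `E`. -/
theorem almost_representation_theorem
    {K A E : Type*} [Group K] [TopologicalSpace K] [IsTopologicalGroup K] [T2Space K]
    [CompactSpace K] [MeasurableSpace K] [BorelSpace K]
    (μ : Measure K) [μ.IsHaarMeasure] [IsProbabilityMeasure μ]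
    -- `A` is a unital real Banach algebra
    [NormedRing A] [NormedAlgebra ℝ A] [CompleteSpace A] [NormOneClass A]
    -- `E` is a real Banach space which is an `A`-module
    [NormedAddCommGroup E] [NormedSpace ℝ E] [CompleteSpace E]
    [Module A E] [SMulCommClass ℝ A E] [ContinuousConstSMul A E]
    (hAE : ∀ (a : A) (e : E), ‖a • e‖ ≤ ‖a‖ * ‖e‖)
    -- the action of `K` on `A` by unital isometric algebra automorphisms
    (act : K → A → A)
    (hact_one : ∀ a, act 1 a = a)
    (hact_mul : ∀ g h a, act (g * h) a = act g (act h a))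
    (hact_add : ∀ g a b, act g (a + b) = act g a + act g b)
    (hact_mul' : ∀ g a b, act g (a * b) = act g a * act g b)
    (hact_smul : ∀ g (r : ℝ) (a : A), act g (r • a) = r • act g a)
    (hact_unital : ∀ g, act g 1 = 1)
    (hact_isom : ∀ g a, ‖act g a‖ = ‖a‖)
    (hact_cont : Continuous fun p : K × A => act p.1 p.2)
    -- `σ` is an `A`-valued multiplier for `K`
    (σ : K → K → A)
    (hσ_cont : Continuous fun p : K × K => σ p.1 p.2)
    (hσ_unit : ∀ g h, IsUnit (σ g h))
    (hσ_central : ∀ g h a, σ g h * a = a * σ g h)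
    (hσ_normal₁ : ∀ h, σ 1 h = 1)
    (hσ_normal₂ : ∀ g, σ g 1 = 1)
    (hσ_cocycle : ∀ g h k, σ g h * σ (g * h) k = act g (σ h k) * σ g (h * k))
    -- `T` is an operator-norm continuous `A`-semilinear pseudorepresentation
    (T : K → E →L[ℝ] E)
    (hT_cont : Continuous T)
    (hT_semilinear : ∀ g (a : A) (e : E), T g (a • e) = act g a • T g e)
    -- the σ-bound is finite and the σ-defect is finite
    (hb_fin : BddAbove (Set.range fun g : K => ell σ g * ‖T g‖))
    (hr_fin : BddAbove (Set.range fun p : K × K =>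
      ell σ p.1 * ‖σ p.1 p.2 • T (p.1 * p.2) - (T p.1).comp (T p.2)‖))
    -- `T` is an almost σ-representation
    (h_almost : sigmaDefect σ T ≤ min (1 / 4) (1 / (9 * (sigmaBound σ T) ^ 2))) :
    ∃ R : K → E →L[ℝ] E,
      Continuous R ∧
      (∀ g (a : A) (e : E), R g (a • e) = act g a • R g e) ∧
      R 1 = 1 ∧
      (∀ g h : K, σ g h • R (g * h) = (R g).comp (R h)) ∧
      (∀ g : K, IsUnit (R g)) ∧
      ∀ g : K, ‖R g - T g‖ ≤ 4 * sigmaBound σ T * sigmaDefect σ T :=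
  almost_representation_theorem_general μ hAE act hact_one hact_mul σ hσ_cont hσ_unit hσ_central
    hσ_normal₁ hσ_cocycle T hT_cont hT_semilinear hb_fin hr_fin h_almost
end

section
/- Almost representation theorem for compact groups on Banach spaces (the de la Harpe–Karoubi-type special case explicitly claimed by the paper): let K be a compact Hausdorff topological group, E a complex Banach space, and T : K → L(E) a map continuous for the operator norm. Put b = sup_{g∈K} ‖T(g)‖ and r = ‖id − T(1)‖ + sup_{g,h∈K} ‖T(gh) − T(g)∘T(h)‖, and assume r ≤ min{1/4, 1/(9·b²)}. Then there exists an operator-norm continuous map R : K → L(E) with R(1) = id and R(gh) = R(g)∘R(h) for all g,h ∈ K (so each R(g) is invertible and R is a continuous representation of K by bounded automorphisms of E), such that ‖R(g) − T(g)‖ ≤ 4·b·r for all g ∈ K. -/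
/-!
Averaging against the normalized Haar measure improves an almost representation `S`:
put `S' g = ∫ S (g h) S(h)⁻¹ dh`. By left invariance,
`S' g S' g' - S' (g g') = ∫ D(g, g' k) J(k) dk` with `D(g, h) = S (g h) S(h)⁻¹ - S g` and
`J(k) = S' g' - S (g' k) S(k)⁻¹`; the term `S g ∫ J` drops out because `∫ J = 0`.
Both factors are `O(cε)` when `‖S(g)⁻¹‖ ≤ c` and `S` is `ε`-multiplicative, so the defect
falls from `ε` to `2c²ε²`, while `S` moves by at most `cε` and `c` grows only to
`c / (1 - c²ε)`. Once `c²ε ≤ 1/5` these bounds reproduce themselves with the step sizes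
halving, so the iterates converge uniformly to a continuous homomorphism within `2cε` of `S`.
For the `T` of the theorem one may take `c = b / (1 - r)` and `ε = r`.
-/

open MeasureTheory Measure Filter Topology
open scoped Ring

section UnitPerturbation

variable {A : Type*} [NormedRing A] [CompleteSpace A] {a b : A} {c δ : ℝ}

theorem IsUnit.of_norm_sub_le (ha : IsUnit a) (hc : ‖a⁻¹ʳ‖ ≤ c) (hδ : ‖b - a‖ ≤ δ)
    (h : c * δ < 1) : IsUnit b := by
  nontriviality A
  obtain ⟨u, rfl⟩ := ha
  rw [Ring.inverse_unit] at hc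
  have hpos : 0 < ‖(↑u⁻¹ : A)‖ := Units.norm_pos u⁻¹
  refine (u.ofNearby b ?_).isUnit
  rw [← one_div, lt_div_iff₀ hpos]
  calc ‖b - u‖ * ‖(↑u⁻¹ : A)‖ ≤ δ * c :=
        mul_le_mul hδ hc hpos.le ((norm_nonneg _).trans hδ)
    _ < 1 := by linarith

theorem IsUnit.norm_inverse_le_of_norm_sub_le (ha : IsUnit a) (hc : ‖a⁻¹ʳ‖ ≤ c)
    (hδ : ‖b - a‖ ≤ δ) (h : c * δ < 1) : ‖b⁻¹ʳ‖ ≤ c / (1 - c * δ) := by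
  have hb := ha.of_norm_sub_le hc hδ h
  have hδ0 : 0 ≤ δ := (norm_nonneg _).trans hδ
  have hc0 : 0 ≤ c := (norm_nonneg _).trans hc
  have key : b⁻¹ʳ = a⁻¹ʳ - a⁻¹ʳ * (b - a) * b⁻¹ʳ := by
    rw [mul_sub, sub_mul, Ring.inverse_mul_cancel _ ha, one_mul, mul_assoc,
      Ring.mul_inverse_cancel _ hb, mul_one, sub_sub_cancel]
  have : ‖b⁻¹ʳ‖ ≤ c + c * δ * ‖b⁻¹ʳ‖ := calc
    ‖b⁻¹ʳ‖ ≤ ‖a⁻¹ʳ‖ + ‖a⁻¹ʳ‖ * ‖b - a‖ * ‖b⁻¹ʳ‖ := by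
      nth_rw 1 [key]; exact (norm_sub_le _ _).trans (add_le_add_right norm_mul₃_le _)
    _ ≤ c + c * δ * ‖b⁻¹ʳ‖ := by gcongr
  rw [le_div_iff₀ (by linarith)]
  linarith

end UnitPerturbation

section AlmostRep

variable {K : Type*} [Group K] [TopologicalSpace K] {A : Type*} [NormedRing A]

structure IsAlmostRep (S : K → A) (c ε : ℝ) : Prop where
  continuous : Continuous S
  isUnit : ∀ g, IsUnit (S g)
  norm_inverse_le : ∀ g, ‖(S g)⁻¹ʳ‖ ≤ c
  norm_mul_sub_le : ∀ g h, ‖S g * S h - S (g * h)‖ ≤ ε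

namespace IsAlmostRep

variable {S : K → A} {c ε : ℝ}

theorem continuous_inverse [CompleteSpace A] (hS : IsAlmostRep S c ε) :
    Continuous fun g => (S g)⁻¹ʳ :=
  continuous_iff_continuousAt.2 fun g => by
    obtain ⟨u, hu⟩ := hS.isUnit g
    exact (hu ▸ NormedRing.inverse_continuousAt u).comp hS.continuous.continuousAt

theorem continuous_mul_inverse [ContinuousMul K] [CompleteSpace A] (hS : IsAlmostRep S c ε) :
    Continuous fun p : K × K => S (p.1 * p.2) * (S p.2)⁻¹ʳ :=
  (hS.continuous.comp continuous_mul).mul (hS.continuous_inverse.comp continuous_snd)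

theorem inverse_bound_nonneg (hS : IsAlmostRep S c ε) : 0 ≤ c :=
  (norm_nonneg _).trans (hS.norm_inverse_le 1)

theorem defect_bound_nonneg (hS : IsAlmostRep S c ε) : 0 ≤ ε :=
  (norm_nonneg _).trans (hS.norm_mul_sub_le 1 1)

theorem norm_mul_inverse_sub_le (hS : IsAlmostRep S c ε) (g h : K) :
    ‖S (g * h) * (S h)⁻¹ʳ - S g‖ ≤ ε * c := by
  have : S (g * h) * (S h)⁻¹ʳ - S g = -((S g * S h - S (g * h)) * (S h)⁻¹ʳ) := by
    rw [sub_mul, mul_assoc, Ring.mul_inverse_cancel _ (hS.isUnit h), mul_one, neg_sub]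
  rw [this, norm_neg]
  exact (norm_mul_le _ _).trans
    (mul_le_mul (hS.norm_mul_sub_le g h) (hS.norm_inverse_le h) (norm_nonneg _)
      hS.defect_bound_nonneg)

end IsAlmostRep

theorem isAlmostRep_of_norm_le [CompleteSpace A] [NormOneClass A] {S : K → A} {b r : ℝ}
    (hS : Continuous S) (hb : ∀ g, ‖S g‖ ≤ b)
    (hr : ∀ g h, ‖1 - S 1‖ + ‖S (g * h) - S g * S h‖ ≤ r) (hr1 : r < 1) :
    IsAlmostRep S (b / (1 - r)) r := by
  have hnear : ∀ g, ‖S g * S g⁻¹ - 1‖ ≤ r := fun g => by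
    have : S g * S g⁻¹ - 1 = -((1 - S 1) + (S (g * g⁻¹) - S g * S g⁻¹)) := by
      rw [mul_inv_cancel]; abel
    rw [this, norm_neg]
    exact (norm_add_le _ _).trans (hr g g⁻¹)
  have hinv_one : ‖(1 : A)⁻¹ʳ‖ ≤ 1 := by rw [Ring.inverse_one, norm_one]
  have hunit : ∀ g, IsUnit (S g * S g⁻¹) := fun g =>
    isUnit_one.of_norm_sub_le hinv_one (hnear g) (by linarith)
  have hright : ∀ g, S g * (S g⁻¹ * (S g * S g⁻¹)⁻¹ʳ) = 1 := fun g => by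
    rw [← mul_assoc, Ring.mul_inverse_cancel _ (hunit g)]
  have hleft : ∀ g, (S g⁻¹ * S g)⁻¹ʳ * S g⁻¹ * S g = 1 := fun g => by
    simpa [mul_assoc] using Ring.inverse_mul_cancel _ (hunit g⁻¹)
  have hSunit : ∀ g, IsUnit (S g) := fun g =>
    isUnit_iff_exists_and_exists.2 ⟨⟨_, hright g⟩, ⟨_, hleft g⟩⟩
  refine ⟨hS, hSunit, fun g => ?_, fun g h => ?_⟩
  · have hinv : (S g)⁻¹ʳ = S g⁻¹ * (S g * S g⁻¹)⁻¹ʳ := by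
      simpa using (Ring.inverse_mul_eq_iff_eq_mul _ 1 _ (hSunit g)).2 (hright g).symm
    have := isUnit_one.norm_inverse_le_of_norm_sub_le hinv_one (hnear g) (by linarith)
    rw [hinv, div_eq_mul_one_div]
    refine (norm_mul_le _ _).trans (mul_le_mul (hb _) (by simpa using this) (norm_nonneg _) ?_)
    exact (norm_nonneg _).trans (hb 1)
  · rw [norm_sub_rev]
    exact (le_add_of_nonneg_left (norm_nonneg _)).trans (hr g h)

end AlmostRep

section Integral

variable {X Y E : Type*} [TopologicalSpace Y] [CompactSpace Y] [MeasurableSpace Y]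
  [OpensMeasurableSpace Y] [NormedAddCommGroup E] (μ : Measure Y) [IsFiniteMeasure μ]

theorem Continuous.integrable_of_compactSpace_s3 {f : Y → E} (hf : Continuous f) : Integrable f μ :=
  hf.integrable_of_hasCompactSupport (.of_compactSpace f)

theorem continuous_parametric_integral_of_compactSpace [TopologicalSpace X] [CompactSpace X]
    [NormedSpace ℝ E] [CompleteSpace E] {f : X → Y → E} (hf : Continuous f.uncurry) :
    Continuous fun x => ∫ y, f x y ∂μ := by
  let F : C(Y, C(X, E)) := ContinuousMap.curry ⟨fun p => f p.2 p.1, by fun_prop⟩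
  have hF : (fun x => ∫ y, f x y ∂μ) = ⇑(∫ y, F y ∂μ) :=
    funext fun x =>
      (ContinuousMap.integral_apply (F.continuous.integrable_of_compactSpace_s3 μ) x).symm
  exact hF ▸ (∫ y, F y ∂μ).continuous

end Integral

section AverageStep

variable {K : Type*} [Group K] [TopologicalSpace K] [IsTopologicalGroup K] [CompactSpace K]
  [MeasurableSpace K] [BorelSpace K]
variable {A : Type*} [NormedRing A] [CompleteSpace A]
variable (μ : Measure K) [IsProbabilityMeasure μ]

theorem IsAlmostRep.integrable_mul_inverse {S : K → A} {c ε : ℝ} (hS : IsAlmostRep S c ε)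
    (g : K) : Integrable (fun h => S (g * h) * (S h)⁻¹ʳ) μ :=
  (hS.continuous_mul_inverse.comp (Continuous.prodMk_right g)).integrable_of_compactSpace_s3 μ

variable [NormedAlgebra ℝ A]

noncomputable def averageStep (S : K → A) (g : K) : A :=
  ∫ h, S (g * h) * (S h)⁻¹ʳ ∂μ

namespace IsAlmostRep

variable {μ} {S : K → A} {c ε : ℝ}

theorem averageStep_sub_eq (hS : IsAlmostRep S c ε) (g : K) :
    averageStep μ S g - S g = ∫ h, (S (g * h) * (S h)⁻¹ʳ - S g) ∂μ := by
  rw [integral_sub (hS.integrable_mul_inverse μ g) (integrable_const _), integral_const,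
    probReal_univ, one_smul, averageStep]

theorem norm_averageStep_sub_le (hS : IsAlmostRep S c ε) (g : K) :
    ‖averageStep μ S g - S g‖ ≤ c * ε := by
  rw [hS.averageStep_sub_eq, mul_comm]
  simpa using norm_integral_le_of_norm_le_const (μ := μ)
    (ae_of_all _ (hS.norm_mul_inverse_sub_le g))

theorem continuous_averageStep (hS : IsAlmostRep S c ε) : Continuous (averageStep μ S) :=
  continuous_parametric_integral_of_compactSpace μ hS.continuous_mul_inverse

theorem averageStep_mul_sub_eq [μ.IsMulLeftInvariant] (hS : IsAlmostRep S c ε) (g g' : K) :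
    averageStep μ S g * averageStep μ S g' - averageStep μ S (g * g') =
      ∫ k, (S (g * (g' * k)) * (S (g' * k))⁻¹ʳ - S g) *
        (averageStep μ S g' - S (g' * k) * (S k)⁻¹ʳ) ∂μ := by
  set J : K → A := fun k => averageStep μ S g' - S (g' * k) * (S k)⁻¹ʳ
  have hJ : Integrable J μ := (integrable_const _).sub (hS.integrable_mul_inverse μ g')
  have hJ0 : ∫ k, J k ∂μ = 0 := by
    rw [integral_sub (integrable_const _) (hS.integrable_mul_inverse μ g'), integral_const,
      probReal_univ, one_smul, averageStep, sub_self]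
  have hpt : ∀ k, S (g * (g' * k)) * (S (g' * k))⁻¹ʳ * averageStep μ S g' -
      S (g * g' * k) * (S k)⁻¹ʳ =
        S g * J k + (S (g * (g' * k)) * (S (g' * k))⁻¹ʳ - S g) * J k := by
    intro k
    rw [← add_mul, add_sub_cancel, mul_sub, mul_assoc (S (g * (g' * k))) _ (_ * _),
      Ring.inverse_mul_cancel_left _ _ (hS.isUnit _), mul_assoc g]
  calc averageStep μ S g * averageStep μ S g' - averageStep μ S (g * g')
      = ∫ k, (S (g * (g' * k)) * (S (g' * k))⁻¹ʳ * averageStep μ S g' -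
          S (g * g' * k) * (S k)⁻¹ʳ) ∂μ := by
        have hX := (hS.integrable_mul_inverse μ g).comp_mul_left g'
        rw [integral_sub (hX.mul_const _) (hS.integrable_mul_inverse μ (g * g')),
          integral_mul_const_of_integrable hX,
          integral_mul_left_eq_self (fun h => S (g * h) * (S h)⁻¹ʳ) g']
        rfl
    _ = ∫ k, (S g * J k + (S (g * (g' * k)) * (S (g' * k))⁻¹ʳ - S g) * J k) ∂μ := by
        simp_rw [hpt]
    _ = _ := by
        have hP := hS.continuous_mul_inverse
        have hDJ : Continuous fun k => (S (g * (g' * k)) * (S (g' * k))⁻¹ʳ - S g) * J k :=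
          ((hP.comp (by fun_prop : Continuous fun k : K => (g, g' * k))).sub
            continuous_const).mul (continuous_const.sub (hP.comp (Continuous.prodMk_right g')))
        rw [integral_add (hJ.const_mul _) (hDJ.integrable_of_compactSpace_s3 μ),
          integral_const_mul_of_integrable hJ, hJ0, mul_zero, zero_add]

theorem norm_averageStep_mul_sub_le [μ.IsMulLeftInvariant] (hS : IsAlmostRep S c ε)
    (g g' : K) :
    ‖averageStep μ S g * averageStep μ S g' - averageStep μ S (g * g')‖ ≤
      2 * c ^ 2 * ε ^ 2 := by
  rw [hS.averageStep_mul_sub_eq g g']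
  suffices ∀ k, ‖(S (g * (g' * k)) * (S (g' * k))⁻¹ʳ - S g) *
      (averageStep μ S g' - S (g' * k) * (S k)⁻¹ʳ)‖ ≤ 2 * c ^ 2 * ε ^ 2 by
    simpa using norm_integral_le_of_norm_le_const (μ := μ) (ae_of_all _ this)
  intro k
  have hJ : ‖averageStep μ S g' - S (g' * k) * (S k)⁻¹ʳ‖ ≤ c * ε + ε * c := by
    rw [← sub_sub_sub_cancel_right _ _ (S g')]
    exact (norm_sub_le _ _).trans
      (add_le_add (hS.norm_averageStep_sub_le g') (hS.norm_mul_inverse_sub_le g' k))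
  calc _ ≤ (ε * c) * (c * ε + ε * c) :=
        (norm_mul_le _ _).trans (mul_le_mul (hS.norm_mul_inverse_sub_le g _) hJ (norm_nonneg _)
          (mul_nonneg hS.defect_bound_nonneg hS.inverse_bound_nonneg))
    _ = 2 * c ^ 2 * ε ^ 2 := by ring

theorem isAlmostRep_averageStep [μ.IsMulLeftInvariant] (hS : IsAlmostRep S c ε)
    (hu : c ^ 2 * ε < 1) :
    IsAlmostRep (averageStep μ S) (c / (1 - c ^ 2 * ε)) (2 * c ^ 2 * ε ^ 2) := by
  have hδ : c * (c * ε) < 1 := by linarith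
  refine ⟨hS.continuous_averageStep, fun g => ?_, fun g => ?_, hS.norm_averageStep_mul_sub_le⟩
  · exact (hS.isUnit g).of_norm_sub_le (hS.norm_inverse_le g) (hS.norm_averageStep_sub_le g) hδ
  · simpa [← mul_assoc, sq] using (hS.isUnit g).norm_inverse_le_of_norm_sub_le
      (hS.norm_inverse_le g) (hS.norm_averageStep_sub_le g) hδ

end IsAlmostRep

end AverageStep

namespace IsAlmostRep

variable {K : Type*} [Group K] [TopologicalSpace K] [IsTopologicalGroup K] [CompactSpace K]
  [MeasurableSpace K] [BorelSpace K]
variable {A : Type*} [NormedRing A] [NormedAlgebra ℝ A] [CompleteSpace A]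
variable (μ : Measure K) [IsProbabilityMeasure μ] [μ.IsMulLeftInvariant]
variable {S : K → A} {c ε : ℝ}

/-- For `u = c²ε ≤ 1/5` the new step size `c'ε' = cε · 2u/(1 - u)` is at most `cε/2`;
`1/5` is exactly the threshold for this. -/
theorem exists_averageStep_le (hS : IsAlmostRep S c ε) (hu : c ^ 2 * ε ≤ 1 / 5) :
    ∃ c' ε', IsAlmostRep (averageStep μ S) c' ε' ∧ c' ^ 2 * ε' ≤ 1 / 5 ∧
      c' * ε' ≤ c * ε / 2 ∧ ε' ≤ ε / 2 := by
  have hc := hS.inverse_bound_nonneg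
  have hε := hS.defect_bound_nonneg
  have hu0 : 0 ≤ c ^ 2 * ε := by positivity
  have hd : 0 < 1 - c ^ 2 * ε := by linarith
  refine ⟨_, _, hS.isAlmostRep_averageStep (by linarith), ?_, ?_, ?_⟩
  · rw [div_pow, div_mul_eq_mul_div, div_le_iff₀ (by positivity),
      show c ^ 2 * (2 * c ^ 2 * ε ^ 2) = 2 * (c ^ 2 * ε) ^ 2 by ring]
    nlinarith
  · rw [div_mul_eq_mul_div, div_le_iff₀ hd,
      show c * (2 * c ^ 2 * ε ^ 2) = c * ε * (2 * (c ^ 2 * ε)) by ring]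
    nlinarith [mul_nonneg hc hε]
  · rw [show 2 * c ^ 2 * ε ^ 2 = 2 * (c ^ 2 * ε) * ε by ring]
    nlinarith

theorem exists_iterate_averageStep_le (hS : IsAlmostRep S c ε) (hu : c ^ 2 * ε ≤ 1 / 5)
    (n : ℕ) :
    ∃ c' ε', IsAlmostRep ((averageStep μ)^[n] S) c' ε' ∧ c' ^ 2 * ε' ≤ 1 / 5 ∧
      c' * ε' ≤ c * ε / 2 ^ n ∧ ε' ≤ ε / 2 ^ n := by
  induction n with
  | zero => exact ⟨c, ε, hS, hu, by simp, by simp⟩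
  | succ n ih =>
    obtain ⟨c', ε', hS', hu', hcε', hε'⟩ := ih
    obtain ⟨c'', ε'', hS'', hu'', hcε'', hε''⟩ := hS'.exists_averageStep_le μ hu'
    rw [Function.iterate_succ_apply', pow_succ, ← div_div, ← div_div]
    exact ⟨c'', ε'', hS'', hu'', by linarith, by linarith⟩

end IsAlmostRep

namespace IsAlmostRep

variable {K : Type*} [Group K] [TopologicalSpace K] [IsTopologicalGroup K] [CompactSpace K]
variable {A : Type*} [NormedRing A] [NormedAlgebra ℝ A] [CompleteSpace A]
variable {S : K → A} {c ε : ℝ}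

theorem exists_continuous_monoidHom (hS : IsAlmostRep S c ε) (hu : c ^ 2 * ε ≤ 1 / 5) :
    ∃ R : K →* A, Continuous R ∧ ∀ g, ‖R g - S g‖ ≤ 2 * c * ε := by
  have hc := hS.inverse_bound_nonneg
  have hε₀ := hS.defect_bound_nonneg
  borelize K
  have : IsProbabilityMeasure (haarMeasure (⊤ : TopologicalSpace.PositiveCompacts K)) :=
    ⟨by rw [← TopologicalSpace.PositiveCompacts.coe_top]; exact haarMeasure_self⟩
  choose c' ε' hrep _ hcε hε using hS.exists_iterate_averageStep_le (haarMeasure ⊤) hu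
  let F : ℕ → C(K, A) := fun n => ⟨_, (hrep n).continuous⟩
  have hF : ∀ n, dist (F n) (F (n + 1)) ≤ 2 * c * ε / 2 / 2 ^ n := fun n => by
    refine (ContinuousMap.dist_le (by positivity)).2 fun g => ?_
    rw [dist_comm, dist_eq_norm]
    simp only [F, ContinuousMap.coe_mk, Function.iterate_succ_apply']
    calc _ ≤ c' n * ε' n := (hrep n).norm_averageStep_sub_le g
      _ ≤ _ := (hcε n).trans_eq (by ring)
  obtain ⟨R, hR⟩ := cauchySeq_tendsto_of_complete (cauchySeq_of_le_geometric_two hF)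
  have hRg : ∀ g, Tendsto (fun n => F n g) atTop (𝓝 (R g)) := fun g =>
    ((continuous_eval_const g).tendsto R).comp hR
  have hmul : ∀ g h, R g * R h = R (g * h) := fun g h => by
    have hdef : Tendsto (fun n => F n g * F n h - F n (g * h)) atTop (𝓝 0) :=
      squeeze_zero_norm (fun n => ((hrep n).norm_mul_sub_le g h).trans (hε n))
        (tendsto_const_nhds.div_atTop (tendsto_pow_atTop_atTop_of_one_lt one_lt_two))
    exact sub_eq_zero.1 (tendsto_nhds_unique (((hRg g).mul (hRg h)).sub (hRg (g * h))) hdef)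
  have hclose : ∀ g, ‖R g - S g‖ ≤ 2 * c * ε := fun g => by
    rw [← dist_eq_norm, dist_comm]
    exact (ContinuousMap.dist_apply_le_dist (f := F 0) g).trans
      (dist_le_of_le_geometric_two_of_tendsto₀ hF hR)
  have hone : R 1 = 1 := by
    have hunit : IsUnit (R 1) := (hS.isUnit 1).of_norm_sub_le (hS.norm_inverse_le 1) (hclose 1)
      (by nlinarith)
    exact hunit.mul_left_cancel (by rw [hmul, mul_one, mul_one])
  exact ⟨⟨⟨R, hone⟩, fun g h => (hmul g h).symm⟩, R.continuous, hclose⟩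

end IsAlmostRep

theorem initial_constants_of_le_min {b r : ℝ} (hb : 0 ≤ b) (hr : 0 ≤ r)
    (h : r ≤ min (1 / 4) (1 / (9 * b ^ 2))) :
    r < 1 ∧ (b / (1 - r)) ^ 2 * r ≤ 1 / 5 ∧ 2 * (b / (1 - r)) * r ≤ 4 * b * r := by
  have hr4 : r ≤ 1 / 4 := h.trans (min_le_left _ _)
  have hb2r : b ^ 2 * r ≤ 1 / 9 := by
    rcases hb.eq_or_lt with rfl | hbpos
    · norm_num
    · have := h.trans (min_le_right _ _)
      rw [le_div_iff₀ (by positivity)] at this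
      linarith
  have hc : b / (1 - r) ≤ 4 / 3 * b := by rw [div_le_iff₀ (by linarith)]; nlinarith
  refine ⟨by linarith, ?_, ?_⟩
  · nlinarith [mul_le_mul hc hc (div_nonneg hb (by linarith)) (by positivity)]
  · nlinarith [mul_le_mul_of_nonneg_right hc hr]

theorem almost_representation_dlHK_general
    {K : Type*} [Group K] [TopologicalSpace K] [IsTopologicalGroup K]
    [CompactSpace K]
    {E : Type*} [NormedAddCommGroup E] [NormedSpace ℂ E] [CompleteSpace E]
    (T : K → E →L[ℂ] E) (hT_cont : Continuous T)
    (b r : ℝ)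
    (hb : b = ⨆ g : K, ‖T g‖)
    (hr : r = ‖(1 : E →L[ℂ] E) - T 1‖ +
        ⨆ p : K × K, ‖T (p.1 * p.2) - (T p.1).comp (T p.2)‖)
    (h_almost : r ≤ min (1 / 4) (1 / (9 * b ^ 2))) :
    ∃ R : K → E →L[ℂ] E,
      Continuous R ∧
      R 1 = 1 ∧
      (∀ g h : K, R (g * h) = (R g).comp (R h)) ∧
      (∀ g : K, IsUnit (R g)) ∧
      ∀ g : K, ‖R g - T g‖ ≤ 4 * b * r := by
  have hTb : ∀ g, ‖T g‖ ≤ b := fun g =>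
    hb ▸ le_ciSup (isCompact_range hT_cont.norm).bddAbove g
  have hTr : ∀ g h, ‖1 - T 1‖ + ‖T (g * h) - T g * T h‖ ≤ r := fun g h =>
    hr ▸ add_le_add_right (le_ciSup (f := fun p : K × K => ‖T (p.1 * p.2) - T p.1 * T p.2‖)
      (isCompact_range (by fun_prop)).bddAbove (g, h)) _
  have hb0 : 0 ≤ b := (norm_nonneg _).trans (hTb 1)
  have hr0 : 0 ≤ r := (add_nonneg (norm_nonneg _) (norm_nonneg _)).trans (hTr 1 1)
  obtain ⟨hr1, hu, hclose⟩ := initial_constants_of_le_min hb0 hr0 h_almost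
  -- `isAlmostRep_of_norm_le` needs `‖1‖ = 1`, which fails for `E = 0`.
  rcases subsingleton_or_nontrivial E with hE | hE
  · refine ⟨T, hT_cont, Subsingleton.elim _ _, fun _ _ => Subsingleton.elim _ _,
      fun _ => isUnit_of_subsingleton _, fun g => ?_⟩
    rw [sub_self, norm_zero]
    positivity
  obtain ⟨R, hRc, hRT⟩ :=
    (isAlmostRep_of_norm_le hT_cont hTb hTr hr1).exists_continuous_monoidHom hu
  exact ⟨R, hRc, map_one R, map_mul R, fun g => (Group.isUnit g).map R,
    fun g => (hRT g).trans hclose⟩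

/-- Almost representation theorem for compact groups on complex Banach spaces
(de la Harpe–Karoubi-type special case): if `T : K → L(E)` is operator-norm
continuous with `b = sup_g ‖T(g)‖` and
`r = ‖id − T(1)‖ + sup_{g,h} ‖T(gh) − T(g)∘T(h)‖ ≤ min {1/4, 1/(9·b²)}`,
then there is an operator-norm continuous representation `R` of `K` by bounded
automorphisms of `E` with `‖R(g) − T(g)‖ ≤ 4·b·r` for all `g`. -/
theorem almost_representation_dlHK
    {K : Type*} [Group K] [TopologicalSpace K] [IsTopologicalGroup K] [T2Space K]
    [CompactSpace K]
    {E : Type*} [NormedAddCommGroup E] [NormedSpace ℂ E] [CompleteSpace E]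
    (T : K → E →L[ℂ] E) (hT_cont : Continuous T)
    (b r : ℝ)
    (hb : b = ⨆ g : K, ‖T g‖)
    (hr : r = ‖(1 : E →L[ℂ] E) - T 1‖ +
        ⨆ p : K × K, ‖T (p.1 * p.2) - (T p.1).comp (T p.2)‖)
    (h_almost : r ≤ min (1 / 4) (1 / (9 * b ^ 2))) :
    ∃ R : K → E →L[ℂ] E,
      Continuous R ∧
      R 1 = 1 ∧
      (∀ g h : K, R (g * h) = (R g).comp (R h)) ∧
      (∀ g : K, IsUnit (R g)) ∧
      ∀ g : K, ‖R g - T g‖ ≤ 4 * b * r :=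
  almost_representation_dlHK_general T hT_cont b r hb hr h_almost
end

section
/- Normalization of multipliers to isometric ones (compact group case of the paper's multiplier lemma): suppose K is compact, and let σ be an A-valued multiplier for K satisfying ‖σ(g,h)⁻¹‖ = 1/‖σ(g,h)‖ for all g,h ∈ K. Then there exists a continuous function ρ : K → ℝ with ρ(g) > 0 for all g such that the A-valued multiplier σ̃ defined by σ̃(g,h) = (ρ(g)·ρ(h)/ρ(gh))·σ(g,h) is isometric: ‖σ̃(g,h)‖ = 1 and ‖σ̃(g,h)⁻¹‖ = 1 for all g,h ∈ K. -/
/-!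
Since `‖σ(g,h)⁻¹‖ = 1/‖σ(g,h)‖`, right multiplication by `σ(g,h)` multiplies norms exactly,
and the action is isometric, so taking norms in the multiplier identity shows that
`f(g,h) = log ‖σ(g,h)‖` is a continuous real 2-cocycle for the trivial action. On a compact
group such a cocycle is the coboundary of its average `b(g) = ∫ f(g,k) dk` against the Haar
probability measure, and `ρ = exp(-b)` rescales every `σ(g,h)` by exactly `‖σ(g,h)‖⁻¹`.
-/

open MeasureTheory

theorem IsUnit.norm_mul_of_norm_inverse {A : Type*} [NormedRing A] {a : A} (ha : IsUnit a)
    (h : ‖Ring.inverse a‖ = 1 / ‖a‖) (b : A) : ‖b * a‖ = ‖b‖ * ‖a‖ := by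
  refine le_antisymm (norm_mul_le b a) ?_
  rcases (norm_nonneg a).eq_or_lt with ha0 | ha0
  · simp [← ha0]
  calc ‖b‖ * ‖a‖ ≤ ‖b * a‖ * ‖Ring.inverse a‖ * ‖a‖ := by
        gcongr
        simpa only [Ring.mul_inverse_cancel_right _ _ ha] using norm_mul_le (b * a) (Ring.inverse a)
    _ = ‖b * a‖ := by rw [h, mul_assoc, one_div_mul_cancel ha0.ne', mul_one]

theorem Ring.inverse_smul {R A : Type*} [Field R] [Ring A] [Algebra R A] {c : R} (hc : c ≠ 0)
    {a : A} (ha : IsUnit a) : Ring.inverse (c • a) = c⁻¹ • Ring.inverse a := by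
  simpa [Units.smul_def, Ring.inverse_of_isUnit ha] using
    Ring.inverse_unit (Units.mk0 c hc • ha.unit)

theorem IsUnit.norm_inverse_inv_norm_smul {A : Type*} [NormedRing A] [NormedAlgebra ℝ A]
    [Nontrivial A] {a : A} (ha : IsUnit a) (h : ‖Ring.inverse a‖ = 1 / ‖a‖) :
    ‖Ring.inverse (‖a‖⁻¹ • a)‖ = 1 := by
  have ha0 : ‖a‖ ≠ 0 := norm_ne_zero_iff.2 ha.ne_zero
  rw [Ring.inverse_smul (inv_ne_zero ha0) ha, norm_smul, h, inv_inv, Real.norm_of_nonneg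
    (norm_nonneg a), mul_one_div_cancel ha0]

theorem continuous_integral_of_continuous_uncurry {X Y : Type*} [TopologicalSpace X] [TopologicalSpace Y]
    [CompactSpace Y] [MeasurableSpace Y] [OpensMeasurableSpace Y] (μ : Measure Y) [IsFiniteMeasure μ] {f : X → Y → ℝ}
    (hf : Continuous (Function.uncurry f)) : Continuous fun x => ∫ y, f x y ∂μ := by
  rw [← continuousOn_univ]
  exact continuousOn_integral_of_compact_support isCompact_univ hf.continuousOn (by simp)

section Coboundary

variable {K : Type*} [Group K] [TopologicalSpace K] [CompactSpace K]

theorem eq_integral_coboundary_of_cocycle [ContinuousMul K] [MeasurableSpace K]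
    [BorelSpace K] (μ : Measure K) [IsProbabilityMeasure μ] [μ.IsMulLeftInvariant]
    {f : K → K → ℝ} (hf : Continuous (Function.uncurry f))
    (hf_cocycle : ∀ g h k, f g h + f (g * h) k = f h k + f g (h * k)) (g h : K) :
    f g h = (∫ k, f g k ∂μ) + (∫ k, f h k ∂μ) - ∫ k, f (g * h) k ∂μ := by
  have hint : ∀ g, Integrable (f g) μ := fun g =>
    (hf.uncurry_left g).integrable_of_hasCompactSupport (HasCompactSupport.of_compactSpace _)
  have hint' : Integrable (fun k => f g (h * k)) μ :=
    (hf.uncurry_left g).comp (continuous_const_mul h) |>.integrable_of_hasCompactSupport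
      (HasCompactSupport.of_compactSpace _)
  have hmean := congrArg (fun u : K → ℝ => ∫ k, u k ∂μ) (funext (hf_cocycle g h))
  simp only [integral_add (integrable_const _) (hint _), integral_add (hint _) hint',
    integral_const, probReal_univ, one_smul, integral_mul_left_eq_self (f g) h] at hmean
  linarith

theorem exists_continuous_coboundary_of_cocycle [IsTopologicalGroup K] {f : K → K → ℝ}
    (hf : Continuous (Function.uncurry f))
    (hf_cocycle : ∀ g h k, f g h + f (g * h) k = f h k + f g (h * k)) :
    ∃ b : K → ℝ, Continuous b ∧ ∀ g h, f g h = b g + b h - b (g * h) := by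
  borelize K
  let μ := Measure.haarMeasure (⊤ : TopologicalSpace.PositiveCompacts K)
  have : IsProbabilityMeasure μ :=
    ⟨by simpa using Measure.haarMeasure_self (K₀ := (⊤ : TopologicalSpace.PositiveCompacts K))⟩
  exact ⟨fun g => ∫ k, f g k ∂μ, continuous_integral_of_continuous_uncurry μ hf,
    eq_integral_coboundary_of_cocycle μ hf hf_cocycle⟩

end Coboundary

theorem multiplier_normalization_general
    {K A : Type*} [Group K] [TopologicalSpace K] [IsTopologicalGroup K]
    [CompactSpace K]
    -- `A` is a unital real Banach algebra
    [NormedRing A] [NormedAlgebra ℝ A] [NormOneClass A]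
    -- the action of `K` on `A` by unital isometric algebra automorphisms
    (act : K → A → A)
    (hact_isom : ∀ g a, ‖act g a‖ = ‖a‖)
    -- `σ` is an `A`-valued multiplier for `K`
    (σ : K → K → A)
    (hσ_cont : Continuous fun p : K × K => σ p.1 p.2)
    (hσ_unit : ∀ g h, IsUnit (σ g h))
    (hσ_cocycle : ∀ g h k, σ g h * σ (g * h) k = act g (σ h k) * σ g (h * k))
    -- `‖σ(g,h)⁻¹‖ = 1/‖σ(g,h)‖`
    (hσ_norm : ∀ g h, ‖Ring.inverse (σ g h)‖ = 1 / ‖σ g h‖) :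
    ∃ ρ : K → ℝ,
      Continuous ρ ∧ (∀ g, 0 < ρ g) ∧
      ∀ g h : K,
        ‖(ρ g * ρ h / ρ (g * h)) • σ g h‖ = 1 ∧
        ‖Ring.inverse ((ρ g * ρ h / ρ (g * h)) • σ g h)‖ = 1 := by
  have : Nontrivial A := NormOneClass.nontrivial
  have hne : ∀ g h, σ g h ≠ 0 := fun g h => (hσ_unit g h).ne_zero
  have hpos : ∀ g h, 0 < ‖σ g h‖ := fun g h => norm_pos_iff.2 (hne g h)
  have hnorm_cocycle : ∀ g h k,
      ‖σ g h‖ * ‖σ (g * h) k‖ = ‖σ h k‖ * ‖σ g (h * k)‖ := fun g h k => by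
    rw [← (hσ_unit _ _).norm_mul_of_norm_inverse (hσ_norm _ _), hσ_cocycle,
      (hσ_unit _ _).norm_mul_of_norm_inverse (hσ_norm _ _), hact_isom]
  obtain ⟨b, hb_cont, hb⟩ := exists_continuous_coboundary_of_cocycle
    (f := fun g h => Real.log ‖σ g h‖) (hσ_cont.norm.log fun p => (hpos p.1 p.2).ne')
    fun g h k => by
      simp only [← Real.log_mul (hpos _ _).ne' (hpos _ _).ne', hnorm_cocycle]
  have hρ : ∀ g h, Real.exp (-b g) * Real.exp (-b h) / Real.exp (-b (g * h)) = ‖σ g h‖⁻¹ :=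
    fun g h => by
      rw [← Real.exp_add, ← Real.exp_sub, ← Real.exp_log (hpos g h), ← Real.exp_neg, hb]
      ring_nf
  refine ⟨fun g => Real.exp (-b g), hb_cont.neg.rexp, fun g => Real.exp_pos _, fun g h => ?_⟩
  simp only [hρ]
  exact ⟨norm_smul_inv_norm (hne g h),
    (hσ_unit g h).norm_inverse_inv_norm_smul (hσ_norm g h)⟩

/-- Normalization of multipliers to isometric ones (compact group case):
if `σ` is an `A`-valued multiplier for a compact Hausdorff group `K` with
`‖σ(g,h)⁻¹‖ = 1/‖σ(g,h)‖`, then there is a continuous positive function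
`ρ : K → ℝ` such that `σ̃(g,h) = (ρ(g)·ρ(h)/ρ(gh))·σ(g,h)` is isometric:
`‖σ̃(g,h)‖ = 1` and `‖σ̃(g,h)⁻¹‖ = 1`. -/
theorem multiplier_normalization
    {K A : Type*} [Group K] [TopologicalSpace K] [IsTopologicalGroup K] [T2Space K]
    [CompactSpace K]
    -- `A` is a unital real Banach algebra
    [NormedRing A] [NormedAlgebra ℝ A] [CompleteSpace A] [NormOneClass A]
    -- the action of `K` on `A` by unital isometric algebra automorphisms
    (act : K → A → A)
    (hact_one : ∀ a, act 1 a = a)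
    (hact_mul : ∀ g h a, act (g * h) a = act g (act h a))
    (hact_add : ∀ g a b, act g (a + b) = act g a + act g b)
    (hact_mul' : ∀ g a b, act g (a * b) = act g a * act g b)
    (hact_smul : ∀ g (r : ℝ) (a : A), act g (r • a) = r • act g a)
    (hact_unital : ∀ g, act g 1 = 1)
    (hact_isom : ∀ g a, ‖act g a‖ = ‖a‖)
    (hact_cont : Continuous fun p : K × A => act p.1 p.2)
    -- `σ` is an `A`-valued multiplier for `K`
    (σ : K → K → A)
    (hσ_cont : Continuous fun p : K × K => σ p.1 p.2)
    (hσ_unit : ∀ g h, IsUnit (σ g h))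
    (hσ_central : ∀ g h a, σ g h * a = a * σ g h)
    (hσ_normal₁ : ∀ h, σ 1 h = 1)
    (hσ_normal₂ : ∀ g, σ g 1 = 1)
    (hσ_cocycle : ∀ g h k, σ g h * σ (g * h) k = act g (σ h k) * σ g (h * k))
    -- `‖σ(g,h)⁻¹‖ = 1/‖σ(g,h)‖`
    (hσ_norm : ∀ g h, ‖Ring.inverse (σ g h)‖ = 1 / ‖σ g h‖) :
    ∃ ρ : K → ℝ,
      Continuous ρ ∧ (∀ g, 0 < ρ g) ∧
      ∀ g h : K,
        ‖(ρ g * ρ h / ρ (g * h)) • σ g h‖ = 1 ∧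
        ‖Ring.inverse ((ρ g * ρ h / ρ (g * h)) • σ g h)‖ = 1 :=
  multiplier_normalization_general act hact_isom σ hσ_cont hσ_unit hσ_cocycle hσ_norm
end

section
/- A proper transitive action on a locally compact Hausdorff space has open orbit maps (group case of the paper's claim that a proper transitive locally compact groupoid is locally transitive): let G be a topological group acting continuously on a locally compact Hausdorff space X; assume the action is proper (the map G × X → X × X, (g,x) ↦ (g•x, x), is a proper map) and transitive (for all x,y ∈ X there is g ∈ G with g•x = y). Then for every y ∈ X the orbit map G → X, g ↦ g•y, is an open map; equivalently, it is a topological quotient map, so the continuous bijection G/Stab(y) → X is a homeomorphism. -/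
/-!
The orbit map `q : g ↦ g • y` is proper, since it is the action map `(g, x) ↦ (g • x, x)`
restricted to `G × {y}`. A proper map is closed, and by transitivity `q` is surjective, so `q`
is a quotient map. The saturation `q⁻¹' (q '' U)` of a set `U ⊆ G` is `U * Stab(y)`, which is
open whenever `U` is, because right multiplications are homeomorphisms; hence `q` is open.
-/

open Set Pointwise

namespace MulAction

variable {G X : Type*} [Group G] [MulAction G X]

theorem preimage_image_smul_eq_mul_stabilizer (y : X) (U : Set G) :
    (fun g : G => g • y) ⁻¹' ((fun g : G => g • y) '' U) = U * stabilizer G y := by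
  ext g
  simp only [mem_preimage, mem_image, mem_mul, SetLike.mem_coe, mem_stabilizer_iff]
  constructor
  · rintro ⟨u, hu, hug⟩
    exact ⟨u, hu, u⁻¹ * g, by rw [mul_smul, ← hug, inv_smul_smul], mul_inv_cancel_left u g⟩
  · rintro ⟨u, hu, s, hs, rfl⟩
    exact ⟨u, hu, by rw [mul_smul, hs]⟩

variable [TopologicalSpace G] [TopologicalSpace X]

theorem isOpenMap_smul_left_of_isQuotientMap [ContinuousConstSMul Gᵐᵒᵖ G] {y : X}
    (hq : Topology.IsQuotientMap fun g : G => g • y) : IsOpenMap fun g : G => g • y := by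
  intro U hU
  rw [← hq.isOpen_preimage, preimage_image_smul_eq_mul_stabilizer]
  exact hU.mul_right

end MulAction

namespace ProperSMul

variable {G X : Type*} [Group G] [MulAction G X] [TopologicalSpace G] [TopologicalSpace X]
  [ProperSMul G X]

theorem isProperMap_smul_left (y : X) : IsProperMap fun g : G => g • y :=
  (isProperMap_fst_of_compactSpace.comp (isProperMap_smul_pair_set (t := {y}))).comp
    (Homeomorph.prodUnique G ({y} : Set X)).symm.isProperMap

theorem isOpenMap_smul_left [ContinuousConstSMul Gᵐᵒᵖ G] [MulAction.IsPretransitive G X] (y : X) :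
    IsOpenMap fun g : G => g • y :=
  have hq := isProperMap_smul_left (G := G) y
  MulAction.isOpenMap_smul_left_of_isQuotientMap <|
    hq.isClosedMap.isQuotientMap hq.continuous (MulAction.surjective_smul G y)

end ProperSMul

theorem proper_transitive_action_isOpenMap_orbitMap_general
    {G X : Type*} [Group G] [TopologicalSpace G] [IsTopologicalGroup G]
    [TopologicalSpace X]
    [MulAction G X]
    (hproper : IsProperMap fun p : G × X => (p.1 • p.2, p.2))
    (htrans : ∀ x y : X, ∃ g : G, g • x = y) :
    ∀ y : X, IsOpenMap fun g : G => g • y :=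
  have : ProperSMul G X := ⟨hproper⟩
  have : MulAction.IsPretransitive G X := ⟨htrans⟩
  ProperSMul.isOpenMap_smul_left

/-- A proper transitive continuous action of a topological group `G` on a locally
compact Hausdorff space `X` has open orbit maps `g ↦ g • y`. -/
theorem proper_transitive_action_isOpenMap_orbitMap
    {G X : Type*} [Group G] [TopologicalSpace G] [IsTopologicalGroup G]
    [TopologicalSpace X] [LocallyCompactSpace X] [T2Space X]
    [MulAction G X] [ContinuousSMul G X]
    (hproper : IsProperMap fun p : G × X => (p.1 • p.2, p.2))
    (htrans : ∀ x y : X, ∃ g : G, g • x = y) :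
    ∀ y : X, IsOpenMap fun g : G => g • y :=
  proper_transitive_action_isOpenMap_orbitMap_general hproper htrans
end
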